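/- arXiv:1302.3095 — 5 statements merged into one kernel-verified Lean document; each statement's English description precedes it below -/
import Mathlib

section
/- Let f : ℝ → ℝ be C^∞ on an open set containing α, with f(α) = 0 and f'(α) ≠ 0, and let A : ℝ → ℝ be C^∞ with A(0) = 1. Set M₀ = A'(0), c₂ = f''(α)/(2 f'(α)), c₃ = f'''(α)/(6 f'(α)). With y(x) = x − f(x)/f'(x), z(x) = y(x) − A(f(y)/f(x))·f(y)/f'(x) and Φ(x) = z(x) − f(z)/( f[z,y] + f[z,x,x](z − y) ) (where f[z,y] = (f(z) − f(y))/(z − y) and f[z,x,x] = ((f(z) − f(x))/(z − x) − f'(x))/(z − x)), the asymptotic error equation Φ(x) − α = c₂³·(M₀ − 2)·(M₀c₂² + 2c₃ − 2c₂²)·(x − α)^6 + O((x − α)^7) holds as x → α through points x ≠ α at which f(x) ≠ 0, z(x) ≠ y(x), z(x) ≠ x and the final denominator is nonzero. -/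
open Topology Filter Asymptotics

namespace FD2Aux

open Topology Filter Asymptotics Metric Set

lemma abs_sub_le_of_mem_uIcc {w y z c : ℝ} (h : w ∈ Set.uIcc y z) :
    |w - c| ≤ |y - c| + |z - c| := by
  rcases Set.mem_uIcc.mp h with ⟨h1, h2⟩ | ⟨h1, h2⟩ <;>
    rw [abs_sub_le_iff] <;>
    constructor <;>
    nlinarith [le_abs_self (y - c), le_abs_self (z - c), neg_abs_le (y - c), neg_abs_le (z - c),
      abs_nonneg (y - c), abs_nonneg (z - c)]

lemma vanish_isBigO {U : Set ℝ} (hU : IsOpen U) {a : ℝ} (haU : a ∈ U) :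
    ∀ (n : ℕ) (g : ℝ → ℝ), ContDiffOn ℝ (⊤ : ℕ∞) g U → (∀ k, k < n → iteratedDeriv k g a = 0) →
      g =O[𝓝 a] fun x => (x - a) ^ n := by
  intro n
  induction n with
  | zero =>
    intro g hg _
    simp only [pow_zero]
    exact ((hg.continuousOn.continuousAt (hU.mem_nhds haU)).tendsto).isBigO_one ℝ
  | succ n ih =>
    intro g hg hvan
    have hg' : ContDiffOn ℝ (⊤ : ℕ∞) (deriv g) U := by
      apply hg.deriv_of_isOpen hU
      exact_mod_cast le_top
    have h1 : deriv g =O[𝓝 a] fun x => (x - a) ^ n := by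
      refine ih (deriv g) hg' fun k hk => ?_
      rw [← iteratedDeriv_succ']
      exact hvan (k + 1) (by omega)
    obtain ⟨C, hC⟩ := isBigO_iff.mp h1
    obtain ⟨r₁, hr₁, hball₁⟩ := Metric.eventually_nhds_iff_ball.mp hC
    obtain ⟨r₂, hr₂, hball₂⟩ := Metric.isOpen_iff.mp hU a haU
    set C' := max C 0 with hC'
    rw [isBigO_iff]
    refine ⟨C', Metric.eventually_nhds_iff_ball.mpr ⟨min r₁ r₂, lt_min hr₁ hr₂, fun x hx => ?_⟩⟩
    have hxa : |x - a| < min r₁ r₂ := by simpa [Real.dist_eq] using hx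
    have hsub : Set.uIcc a x ⊆ ball a (min r₁ r₂) := by
      intro w hw
      have := abs_sub_le_of_mem_uIcc (c := a) hw
      simp only [sub_self, abs_zero, zero_add] at this
      have : |w - a| < min r₁ r₂ := lt_of_le_of_lt this hxa
      simpa [mem_ball, Real.dist_eq]
    have hdiff : ∀ w ∈ Set.uIcc a x, DifferentiableAt ℝ g w := by
      intro w hw
      have hwU : w ∈ U := hball₂ (lt_of_lt_of_le (by simpa [mem_ball] using hsub hw) (min_le_right _ _))
      exact (hg.contDiffAt (hU.mem_nhds hwU)).differentiableAt (by simp)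
    have hbound : ∀ w ∈ Set.uIcc a x, ‖deriv g w‖ ≤ C' * |x - a| ^ n := by
      intro w hw
      have hwb : w ∈ ball a r₁ := by
        have := hsub hw
        simp only [mem_ball] at this ⊢
        exact lt_of_lt_of_le this (min_le_left _ _)
      have h2 := hball₁ w hwb
      have hwa : |w - a| ≤ |x - a| := by
        have := abs_sub_le_of_mem_uIcc (c := a) hw
        simpa [sub_self, abs_zero, zero_add] using this
      calc ‖deriv g w‖ ≤ C * ‖(w - a) ^ n‖ := h2
        _ ≤ C' * |x - a| ^ n := by
            rw [Real.norm_eq_abs, abs_pow]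
            by_cases hC0 : 0 ≤ C
            · exact mul_le_mul (le_max_left _ _) (pow_le_pow_left₀ (abs_nonneg _) hwa n)
                (by positivity) (le_trans hC0 (le_max_left _ _))
            · push_neg at hC0
              have : C * |w - a| ^ n ≤ 0 := mul_nonpos_of_nonpos_of_nonneg hC0.le (by positivity)
              exact le_trans this (by positivity)
    have hmvt := (convex_uIcc a x).norm_image_sub_le_of_norm_deriv_le (f := g) (C := C' * |x - a| ^ n)
      hdiff hbound (Set.left_mem_uIcc) (Set.right_mem_uIcc)
    have hga : g a = 0 := by simpa [iteratedDeriv_zero] using hvan 0 (by omega)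
    calc ‖g x‖ = ‖g x - g a‖ := by rw [hga, sub_zero]
      _ ≤ C' * |x - a| ^ n * ‖x - a‖ := hmvt
      _ = C' * ‖(x - a) ^ (n + 1)‖ := by
          rw [Real.norm_eq_abs, Real.norm_eq_abs, abs_pow, pow_succ]; ring

lemma isBigO_pow_pow {a : ℝ} {m n : ℕ} (h : m ≤ n) :
    (fun x : ℝ => (x - a) ^ n) =O[𝓝 a] fun x => (x - a) ^ m := by
  rw [isBigO_iff]
  refine ⟨1, Metric.eventually_nhds_iff_ball.mpr ⟨1, one_pos, fun x hx => ?_⟩⟩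
  have hxa : |x - a| ≤ 1 := le_of_lt (by simpa [Real.dist_eq] using hx)
  rw [one_mul, Real.norm_eq_abs, Real.norm_eq_abs, abs_pow, abs_pow]
  exact pow_le_pow_of_le_one (abs_nonneg _) hxa h

lemma div_diff_bound (T : ℝ → ℝ) (a ρ C : ℝ) (n : ℕ) (hC : 0 ≤ C)
    (hdiff : ∀ w, |w - a| < ρ → DifferentiableAt ℝ T w)
    (hb : ∀ w, |w - a| < ρ → |deriv T w| ≤ C * |w - a| ^ n)
    (p q : ℝ) (hp : |p - a| < ρ / 2) (hq : |q - a| < ρ / 2) :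
    |T p - T q| ≤ C * (|p - a| + |q - a|) ^ n * |p - q| := by
  have hsub : ∀ w ∈ Set.uIcc q p, |w - a| < ρ := by
    intro w hw
    have := abs_sub_le_of_mem_uIcc (c := a) hw
    linarith
  have hd : ∀ w ∈ Set.uIcc q p, DifferentiableAt ℝ T w := fun w hw => hdiff w (hsub w hw)
  have hbd : ∀ w ∈ Set.uIcc q p, ‖deriv T w‖ ≤ C * (|p - a| + |q - a|) ^ n := by
    intro w hw
    have h1 := hb w (hsub w hw)
    have h2 := abs_sub_le_of_mem_uIcc (c := a) hw
    rw [Real.norm_eq_abs]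
    refine h1.trans (mul_le_mul_of_nonneg_left ?_ hC)
    refine pow_le_pow_left₀ (abs_nonneg _) ?_ n
    linarith
  have := (convex_uIcc q p).norm_image_sub_le_of_norm_deriv_le hd hbd
    Set.left_mem_uIcc Set.right_mem_uIcc
  simpa [Real.norm_eq_abs] using this

lemma taylor1_bound (T : ℝ → ℝ) (a ρ C : ℝ) (n : ℕ) (hC : 0 ≤ C)
    (hdiff : ∀ w, |w - a| < ρ → DifferentiableAt ℝ T w)
    (hdiff' : ∀ w, |w - a| < ρ → DifferentiableAt ℝ (deriv T) w)
    (hb2 : ∀ w, |w - a| < ρ → |deriv (deriv T) w| ≤ C * |w - a| ^ n)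
    (p q : ℝ) (hp : |p - a| < ρ / 2) (hq : |q - a| < ρ / 2) :
    |T p - T q - deriv T q * (p - q)| ≤ C * (|p - a| + |q - a|) ^ n * |p - q| ^ 2 := by
  have hsub : ∀ w ∈ Set.uIcc q p, |w - a| < ρ := by
    intro w hw
    have := abs_sub_le_of_mem_uIcc (c := a) hw
    linarith
  set B := C * (|p - a| + |q - a|) ^ n with hB
  have hBnn : 0 ≤ B := by positivity
  have hd' : ∀ w ∈ Set.uIcc q p, DifferentiableAt ℝ (deriv T) w :=
    fun w hw => hdiff' w (hsub w hw)
  have hbd2 : ∀ w ∈ Set.uIcc q p, ‖deriv (deriv T) w‖ ≤ B := by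
    intro w hw
    have h1 := hb2 w (hsub w hw)
    have h2 := abs_sub_le_of_mem_uIcc (c := a) hw
    rw [Real.norm_eq_abs]
    refine h1.trans (mul_le_mul_of_nonneg_left ?_ hC)
    refine pow_le_pow_left₀ (abs_nonneg _) ?_ n
    linarith
  have hstep1 : ∀ w ∈ Set.uIcc q p, |deriv T w - deriv T q| ≤ B * |w - q| := by
    intro w hw
    have := (convex_uIcc q p).norm_image_sub_le_of_norm_deriv_le hd' hbd2
      Set.left_mem_uIcc hw
    simpa [Real.norm_eq_abs] using this
  -- outer MVT on g w = T w - deriv T q * w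
  set g : ℝ → ℝ := fun w => T w - deriv T q * w with hg
  have hgd : ∀ w ∈ Set.uIcc q p, DifferentiableAt ℝ g w := by
    intro w hw
    exact (hdiff w (hsub w hw)).sub ((differentiable_id.const_mul _).differentiableAt)
  have hgderiv : ∀ w ∈ Set.uIcc q p, deriv g w = deriv T w - deriv T q := by
    intro w hw
    have h1 : HasDerivAt (fun w : ℝ => deriv T q * w) (deriv T q) w := by
      simpa using (hasDerivAt_id w).const_mul (deriv T q)
    exact ((hdiff w (hsub w hw)).hasDerivAt.sub h1).deriv
  have hgb : ∀ w ∈ Set.uIcc q p, ‖deriv g w‖ ≤ B * |p - q| := by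
    intro w hw
    rw [Real.norm_eq_abs, hgderiv w hw]
    refine (hstep1 w hw).trans (mul_le_mul_of_nonneg_left ?_ hBnn)
    have := abs_sub_le_of_mem_uIcc (c := q) hw
    simpa using this
  have := (convex_uIcc q p).norm_image_sub_le_of_norm_deriv_le hgd hgb
    Set.left_mem_uIcc Set.right_mem_uIcc
  rw [Real.norm_eq_abs, Real.norm_eq_abs, hg] at this
  calc |T p - T q - deriv T q * (p - q)|
      = |T p - deriv T q * p - (T q - deriv T q * q)| := by ring_nf
    _ ≤ B * |p - q| * |p - q| := this
    _ = C * (|p - a| + |q - a|) ^ n * |p - q| ^ 2 := by rw [hB]; ring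

end FD2Aux

set_option maxHeartbeats 4000000 in
/-- Asymptotic error equation of scheme (FD2):
`Φ x - α = c₂³·(M₀ - 2)·(M₀c₂² + 2c₃ - 2c₂²)·(x - α)⁶ + O((x - α)⁷)`
as `x → α` through admissible points. -/
theorem fd2_error_equation
    (f A : ℝ → ℝ) (α : ℝ)
    (U : Set ℝ) (hU : IsOpen U) (hαU : α ∈ U)
    (hf : ContDiffOn ℝ (⊤ : ℕ∞) f U)
    (hroot : f α = 0) (hf'α : deriv f α ≠ 0)
    (hA : ContDiff ℝ (⊤ : ℕ∞) A) (hA0 : A 0 = 1)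
    (M₀ c₂ c₃ : ℝ)
    (hM₀ : M₀ = deriv A 0)
    (hc₂ : c₂ = iteratedDeriv 2 f α / (2 * deriv f α))
    (hc₃ : c₃ = iteratedDeriv 3 f α / (6 * deriv f α))
    (y z D Φ : ℝ → ℝ)
    (hy : ∀ x, y x = x - f x / deriv f x)
    (hz : ∀ x, z x = y x - A (f (y x) / f x) * (f (y x) / deriv f x))
    (hD : ∀ x, D x = (f (z x) - f (y x)) / (z x - y x) +
      ((f (z x) - f x) / (z x - x) - deriv f x) / (z x - x) * (z x - y x))
    (hΦ : ∀ x, Φ x = z x - f (z x) / D x) :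
    (fun x => Φ x - α - c₂ ^ 3 * (M₀ - 2) * (M₀ * c₂ ^ 2 + 2 * c₃ - 2 * c₂ ^ 2) * (x - α) ^ 6)
      =O[𝓝[{x : ℝ | x ≠ α ∧ f x ≠ 0 ∧ z x ≠ y x ∧ z x ≠ x ∧ D x ≠ 0}] α]
      (fun x => (x - α) ^ 7) := by
  classical
  set S : Set ℝ := {x : ℝ | x ≠ α ∧ f x ≠ 0 ∧ z x ≠ y x ∧ z x ≠ x ∧ D x ≠ 0} with hSdef
  set l : Filter ℝ := 𝓝[S] α with hldef
  have hl : l ≤ 𝓝 α := nhdsWithin_le_nhds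
  have hmem : ∀ᶠ x in l, x ∈ S := eventually_mem_nhdsWithin
  set a1 : ℝ := deriv f α with ha1def
  have ha1 : a1 ≠ 0 := hf'α
  have hfC : ContDiffOn ℝ (⊤ : ℕ∞) f U := hf.of_le (by simp)
  have htop : ((⊤ : ℕ∞) : WithTop ℕ∞) + 1 ≤ (⊤ : ℕ∞) := by
    exact_mod_cast le_top
  have hone : ((⊤ : ℕ∞) : WithTop ℕ∞) ≠ 0 := by simp
  have hfdiff : ∀ w ∈ U, DifferentiableAt ℝ f w := fun w hw =>
    (hfC.contDiffAt (hU.mem_nhds hw)).differentiableAt hone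
  have hi2 : iteratedDeriv 2 f α = 2 * c₂ * a1 := by
    rw [hc₂]; field_simp
  have hi3 : iteratedDeriv 3 f α = 6 * c₃ * a1 := by
    rw [hc₃]; field_simp
  -- cubic model polynomial and remainder
  set L : ℝ → ℝ := fun w => a1 * ((w - α) + c₂ * (w - α) ^ 2 + c₃ * (w - α) ^ 3) with hLdef
  set L1 : ℝ → ℝ := fun w => a1 * (1 + 2 * c₂ * (w - α) + 3 * c₃ * (w - α) ^ 2) with hL1def
  set L2 : ℝ → ℝ := fun w => a1 * (2 * c₂ + 6 * c₃ * (w - α)) with hL2def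
  set T : ℝ → ℝ := fun w => f w - L w with hTdef
  have hsub0 : ∀ w : ℝ, HasDerivAt (fun w : ℝ => w - α) 1 w := fun w => (hasDerivAt_id w).sub_const α
  have hLd : ∀ w, HasDerivAt L (L1 w) w := by
    intro w
    have h2 : HasDerivAt (fun w : ℝ => (w - α) ^ 2) (2 * (w - α)) w := by
      simpa using (hsub0 w).fun_pow 2
    have h3 : HasDerivAt (fun w : ℝ => (w - α) ^ 3) (3 * (w - α) ^ 2) w := by
      simpa using (hsub0 w).fun_pow 3
    have := (((hsub0 w).add (h2.const_mul c₂)).add (h3.const_mul c₃)).const_mul a1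
    refine this.congr_deriv ?_
    simp only [hL1def]; ring
  have hL1d : ∀ w, HasDerivAt L1 (L2 w) w := by
    intro w
    have h2 : HasDerivAt (fun w : ℝ => (w - α) ^ 2) (2 * (w - α)) w := by
      simpa using (hsub0 w).fun_pow 2
    have := ((((hsub0 w).const_mul (2 * c₂)).const_add 1).add (h2.const_mul (3 * c₃))).const_mul a1
    refine this.congr_deriv ?_
    simp only [hL2def]; ring
  have hL2d : ∀ w, HasDerivAt L2 (a1 * (6 * c₃)) w := by
    intro w
    have := (((hsub0 w).const_mul (6 * c₃)).const_add (2 * c₂)).const_mul a1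
    refine this.congr_deriv ?_
    ring
  have hLC : ContDiff ℝ (⊤ : ℕ∞) L := by
    simp only [hLdef]; fun_prop
  have hTC : ContDiffOn ℝ (⊤ : ℕ∞) T U := hfC.sub hLC.contDiffOn
  have hdT : ∀ w ∈ U, deriv T w = deriv f w - L1 w := by
    intro w hw
    exact (((hfdiff w hw).hasDerivAt).sub (hLd w)).deriv
  -- vanishing of T-derivatives at α
  have hT0 : T α = 0 := by simp [hTdef, hLdef, hroot]
  have hT1 : deriv T α = 0 := by
    rw [hdT α hαU]; simp [hL1def, ← ha1def]
  have hfC' : ContDiffOn ℝ (⊤ : ℕ∞) (deriv f) U := hfC.deriv_of_isOpen hU htop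
  have hfC'' : ContDiffOn ℝ (⊤ : ℕ∞) (deriv (deriv f)) U := hfC'.deriv_of_isOpen hU htop
  have hf'diff : ∀ w ∈ U, DifferentiableAt ℝ (deriv f) w := fun w hw =>
    (hfC'.contDiffAt (hU.mem_nhds hw)).differentiableAt hone
  have hf''diff : ∀ w ∈ U, DifferentiableAt ℝ (deriv (deriv f)) w := fun w hw =>
    (hfC''.contDiffAt (hU.mem_nhds hw)).differentiableAt hone
  have hevT1 : deriv T =ᶠ[𝓝 α] fun w => deriv f w - L1 w :=
    eventually_of_mem (hU.mem_nhds hαU) hdT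
  have hdT2 : ∀ w ∈ U, deriv (deriv T) w = deriv (deriv f) w - L2 w := by
    intro w hw
    have hev : deriv T =ᶠ[𝓝 w] fun v => deriv f v - L1 v :=
      eventually_of_mem (hU.mem_nhds hw) hdT
    rw [hev.deriv_eq]
    exact ((hf'diff w hw).hasDerivAt.sub (hL1d w)).deriv
  have hT2 : iteratedDeriv 2 T α = 0 := by
    rw [show (2:ℕ) = 1 + 1 from rfl, iteratedDeriv_succ, iteratedDeriv_one]
    rw [hdT2 α hαU]
    have : deriv (deriv f) α = iteratedDeriv 2 f α := by
      rw [show (2:ℕ) = 1 + 1 from rfl, iteratedDeriv_succ, iteratedDeriv_one]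
    rw [this, hi2]; simp [hL2def]; ring
  have hT3 : iteratedDeriv 3 T α = 0 := by
    rw [show (3:ℕ) = 2 + 1 from rfl, iteratedDeriv_succ]
    have hev2 : iteratedDeriv 2 T =ᶠ[𝓝 α] fun w => deriv (deriv f) w - L2 w := by
      have h1 : iteratedDeriv 2 T = deriv (deriv T) := by
        rw [show (2:ℕ) = 1 + 1 from rfl, iteratedDeriv_succ, iteratedDeriv_one]
      rw [h1]
      exact eventually_of_mem (hU.mem_nhds hαU) hdT2
    rw [hev2.deriv_eq]
    have hd3 : deriv (fun w => deriv (deriv f) w - L2 w) α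
        = deriv (deriv (deriv f)) α - a1 * (6 * c₃) :=
      ((hf''diff α hαU).hasDerivAt.sub (hL2d α)).deriv
    rw [hd3]
    have : deriv (deriv (deriv f)) α = iteratedDeriv 3 f α := by
      rw [show (3:ℕ) = 2 + 1 from rfl, iteratedDeriv_succ,
        show (2:ℕ) = 1 + 1 from rfl, iteratedDeriv_succ, iteratedDeriv_one]
    rw [this, hi3]; ring
  -- big-O facts for T and its derivatives
  have hT4 : T =O[𝓝 α] fun x => (x - α) ^ 4 := by
    refine FD2Aux.vanish_isBigO hU hαU 4 T hTC fun k hk => ?_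
    interval_cases k
    · simpa [iteratedDeriv_zero] using hT0
    · simpa [iteratedDeriv_one] using hT1
    · exact hT2
    · exact hT3
  have hTC1 : ContDiffOn ℝ (⊤ : ℕ∞) (deriv T) U := hTC.deriv_of_isOpen hU htop
  have hT'3 : deriv T =O[𝓝 α] fun x => (x - α) ^ 3 := by
    refine FD2Aux.vanish_isBigO hU hαU 3 (deriv T) hTC1 fun k hk => ?_
    interval_cases k
    · simpa [iteratedDeriv_zero] using hT1
    · rw [← iteratedDeriv_succ']; exact hT2
    · rw [← iteratedDeriv_succ']; exact hT3
  have hT''2 : deriv (deriv T) =O[𝓝 α] fun x => (x - α) ^ 2 := by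
    refine FD2Aux.vanish_isBigO hU hαU 2 (deriv (deriv T)) (hTC1.deriv_of_isOpen hU htop)
      fun k hk => ?_
    interval_cases k
    · have h2eq : iteratedDeriv 2 T = deriv (deriv T) := by
        rw [iteratedDeriv_succ', iteratedDeriv_one]
      rw [iteratedDeriv_zero, ← h2eq]; exact hT2
    · rw [← iteratedDeriv_succ', ← iteratedDeriv_succ']; exact hT3
  -- pointwise bound extraction
  have exB : ∀ (g : ℝ → ℝ) (n : ℕ), (g =O[𝓝 α] fun x => (x - α) ^ n) →
      ∃ C, 0 < C ∧ ∃ r, 0 < r ∧ ∀ w, |w - α| < r → |g w| ≤ C * |w - α| ^ n := by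
    intro g n h
    obtain ⟨C, hC⟩ := isBigO_iff.mp h
    obtain ⟨r, hr, hball⟩ := Metric.eventually_nhds_iff_ball.mp hC
    refine ⟨|C| + 1, by positivity, r, hr, fun w hw => ?_⟩
    have := hball w (by simpa [Metric.mem_ball, Real.dist_eq] using hw)
    rw [Real.norm_eq_abs, Real.norm_eq_abs, abs_pow] at this
    exact this.trans (mul_le_mul_of_nonneg_right
      (by linarith [le_abs_self C]) (by positivity))
  -- toolkit on the filter l
  have mulO : ∀ {g h : ℝ → ℝ} {m n : ℕ}, (g =O[l] fun x => (x - α) ^ m) →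
      (h =O[l] fun x => (x - α) ^ n) →
      (fun x => g x * h x) =O[l] fun x => (x - α) ^ (m + n) := by
    intro g h m n hg hh
    have := hg.mul hh
    simpa [← pow_add] using this
  have weakO : ∀ {g : ℝ → ℝ} {m n : ℕ}, (g =O[l] fun x => (x - α) ^ n) → m ≤ n →
      g =O[l] fun x => (x - α) ^ m :=
    fun hg hmn => hg.trans ((FD2Aux.isBigO_pow_pow hmn).mono hl)
  have polyO : ∀ (P : ℝ → ℝ), ContinuousAt P α → ∀ (n : ℕ),
      (fun x => (x - α) ^ n * P x) =O[l] fun x => (x - α) ^ n := by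
    intro P hP n
    have h1 : P =O[𝓝 α] fun _ => (1 : ℝ) := hP.tendsto.isBigO_one ℝ
    have := (isBigO_refl (fun x : ℝ => (x - α) ^ n) (𝓝 α)).mul h1
    simpa using this.mono hl
  have divO : ∀ {N d : ℝ → ℝ} {n : ℕ} {m : ℝ}, 0 < m →
      (N =O[l] fun x => (x - α) ^ n) → (∀ᶠ x in l, m ≤ |d x|) →
      (fun x => N x / d x) =O[l] fun x => (x - α) ^ n := by
    intro N d n m hm hN hd
    obtain ⟨C, hC⟩ := isBigO_iff.mp hN
    rw [isBigO_iff]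
    refine ⟨|C| / m, ?_⟩
    filter_upwards [hC, hd] with x h1 h2
    rw [Real.norm_eq_abs, abs_div]
    rw [Real.norm_eq_abs] at h1
    have hd0 : 0 < |d x| := lt_of_lt_of_le hm h2
    have h1' : |N x| ≤ |C| * ‖(x - α) ^ n‖ :=
      h1.trans (mul_le_mul_of_nonneg_right (le_abs_self C) (norm_nonneg _))
    calc |N x| / |d x| ≤ |N x| / m := div_le_div_of_nonneg_left (abs_nonneg _) hm h2
      _ ≤ (|C| * ‖(x - α) ^ n‖) / m := by gcongr
      _ = |C| / m * ‖(x - α) ^ n‖ := by ring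
  have hne : ∀ᶠ x in l, x ≠ α := by
    filter_upwards [hmem] with x hx; exact hx.1
  have divOE : ∀ {N d : ℝ → ℝ} {n : ℕ} {m : ℝ}, 0 < m →
      (N =O[l] fun x => (x - α) ^ (n + 1)) → (∀ᶠ x in l, m * |x - α| ≤ |d x|) →
      (fun x => N x / d x) =O[l] fun x => (x - α) ^ n := by
    intro N d n m hm hN hd
    obtain ⟨C, hC⟩ := isBigO_iff.mp hN
    rw [isBigO_iff]
    refine ⟨|C| / m, ?_⟩
    filter_upwards [hC, hd, hne] with x h1 h2 h3
    have hxa : 0 < |x - α| := by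
      simpa [abs_pos, sub_ne_zero] using h3
    have hd0 : 0 < |d x| := lt_of_lt_of_le (by positivity) h2
    rw [Real.norm_eq_abs, abs_div]
    rw [Real.norm_eq_abs] at h1
    have h1' : |N x| ≤ |C| * |x - α| ^ (n + 1) := by
      rw [Real.norm_eq_abs, abs_pow] at h1
      exact h1.trans (mul_le_mul_of_nonneg_right (le_abs_self C) (by positivity))
    rw [Real.norm_eq_abs, abs_pow]
    calc |N x| / |d x| ≤ |N x| / (m * |x - α|) :=
          div_le_div_of_nonneg_left (abs_nonneg _) (by positivity) h2
      _ ≤ (|C| * |x - α| ^ (n + 1)) / (m * |x - α|) := by gcongr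
      _ = |C| / m * |x - α| ^ n := by
          rw [pow_succ]; field_simp
  have EtendO : Tendsto (fun x : ℝ => x - α) l (𝓝 0) := by
    have : Tendsto (fun x : ℝ => x - α) (𝓝 α) (𝓝 (α - α)) := tendsto_id.sub_const α
    rw [sub_self] at this
    exact this.mono_left hl
  have eaball : ∀ r : ℝ, 0 < r → ∀ᶠ x in l, |x - α| < r := by
    intro r hr
    have := Metric.tendsto_nhds.mp EtendO r hr
    simpa [Real.dist_eq] using this
  have smallO : ∀ {g : ℝ → ℝ} {n : ℕ}, 0 < n → (g =O[l] fun x => (x - α) ^ n) →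
      ∀ ε : ℝ, 0 < ε → ∀ᶠ x in l, |g x| < ε := by
    intro g n hn hg ε hε
    have h0 : Tendsto (fun x : ℝ => (x - α) ^ n) l (𝓝 0) := by
      have := EtendO.pow n
      simpa [zero_pow hn.ne'] using this
    have := Metric.tendsto_nhds.mp (hg.trans_tendsto h0) ε hε
    simpa [Real.dist_eq] using this
  -- lower bound for deriv f near α
  have hf'cont : ContinuousAt (deriv f) α :=
    hfC'.continuousOn.continuousAt (hU.mem_nhds hαU)
  have hf'low : ∀ᶠ x in l, |a1| / 2 ≤ |deriv f x| := by
    have hev := Metric.tendsto_nhds.mp hf'cont.tendsto (|a1| / 2) (by positivity)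
    filter_upwards [hev.filter_mono hl] with x hx
    rw [Real.dist_eq] at hx
    have h1 := abs_sub_abs_le_abs_sub a1 (deriv f x)
    have h2 : |a1 - deriv f x| = |deriv f x - a1| := abs_sub_comm _ _
    have h3 : |deriv f x - a1| < |a1| / 2 := hx
    linarith
  have hf'ne : ∀ᶠ x in l, deriv f x ≠ 0 := by
    filter_upwards [hf'low] with x hx
    intro h0
    rw [h0] at hx
    simp only [abs_zero] at hx
    have : |a1| > 0 := abs_pos.mpr ha1
    linarith
  -- f as model + remainder, big-O statements moved to l
  have hfeq : ∀ x, f x = L x + T x := by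
    intro x; simp [hTdef]
  have hf'eqU : ∀ᶠ x in l, deriv f x = L1 x + deriv T x := by
    have hUl : ∀ᶠ x in l, x ∈ U := hl (hU.mem_nhds hαU)
    filter_upwards [hUl] with x hx
    rw [hdT x hx]; ring
  have hT4l : T =O[l] fun x => (x - α) ^ 4 := hT4.mono hl
  have hT'3l : deriv T =O[l] fun x => (x - α) ^ 3 := hT'3.mono hl
  -- lower bound for f: |f x| ≥ |a1|/2 * |x-α| eventually
  have hflow : ∀ᶠ x in l, |a1| / 2 * |x - α| ≤ |f x| := by
    have hrem : (fun x => f x - a1 * (x - α)) =O[l] fun x => (x - α) ^ 2 := by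
      have h1 : (fun x => (x - α) ^ 2 * (a1 * (c₂ + c₃ * (x - α)))) =O[l]
          fun x => (x - α) ^ 2 := polyO _ (by fun_prop) 2
      have h2 := (weakO hT4l (by norm_num : 2 ≤ 4)).add h1
      refine h2.congr_left fun x => ?_
      simp only [hTdef, hLdef]; ring
    obtain ⟨C, hC⟩ := isBigO_iff.mp hrem
    have hCpos : ∀ᶠ x in l, |C| * |x - α| ≤ |a1| / 2 := by
      rcases eq_or_lt_of_le (abs_nonneg C) with hC0 | hC0
      · filter_upwards [eaball 1 one_pos] with x _
        rw [← hC0]; simp; positivity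
      · filter_upwards [eaball (|a1| / (2 * |C|)) (by positivity)] with x hx
        rw [show |a1| / 2 = |C| * (|a1| / (2 * |C|)) by field_simp]
        exact mul_le_mul_of_nonneg_left hx.le (abs_nonneg C)
    filter_upwards [hC, hCpos] with x h1 h2
    have h1' : |f x - a1 * (x - α)| ≤ |C| * |x - α| ^ 2 := by
      rw [Real.norm_eq_abs, Real.norm_eq_abs, abs_pow] at h1
      exact h1.trans (mul_le_mul_of_nonneg_right (le_abs_self C) (by positivity))
    have ht : |a1 * (x - α)| - |f x - a1 * (x - α)| ≤ |f x| := by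
      have := abs_sub_abs_le_abs_sub (a1 * (x - α)) (f x)
      have h3 : |a1 * (x - α) - f x| = |f x - a1 * (x - α)| := abs_sub_comm _ _
      linarith [this, h3.le]
    have h4 : |C| * |x - α| ^ 2 ≤ |a1| / 2 * |x - α| := by
      rw [pow_two, ← mul_assoc]
      exact mul_le_mul_of_nonneg_right (by linarith) (abs_nonneg _)
    rw [abs_mul] at ht
    linarith
  -- A-side remainder
  have hAC : ContDiff ℝ (⊤ : ℕ∞) A := hA.of_le (by simp)
  set SA : ℝ → ℝ := fun t => A t - (1 + M₀ * t) with hSAdef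
  have hSAC : ContDiffOn ℝ (⊤ : ℕ∞) SA Set.univ := by
    apply ContDiff.contDiffOn
    simp only [hSAdef]
    exact hAC.sub (contDiff_const.add (contDiff_const.mul contDiff_id))
  have hSA1 : deriv SA 0 = 0 := by
    have h1 : HasDerivAt (fun t : ℝ => 1 + M₀ * t) M₀ 0 := by
      simpa using (((hasDerivAt_id (0 : ℝ)).const_mul M₀).const_add 1)
    have h2 : DifferentiableAt ℝ A 0 := (hAC.differentiable hone).differentiableAt
    have h3 := (h2.hasDerivAt.fun_sub h1).deriv
    simp only [hSAdef]
    rw [h3, ← hM₀]; ring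
  have hSA2 : SA =O[𝓝 0] fun t => t ^ 2 := by
    have h := FD2Aux.vanish_isBigO isOpen_univ (Set.mem_univ (0 : ℝ)) 2 SA hSAC ?_
    · simpa using h
    intro k hk
    interval_cases k
    · simp [iteratedDeriv_zero, hSAdef, hA0]
    · simpa [iteratedDeriv_one] using hSA1
  obtain ⟨CA, hCA⟩ := isBigO_iff.mp hSA2
  obtain ⟨rA, hrA, hballA⟩ := Metric.eventually_nhds_iff_ball.mp hCA
  -- deriv f - L1 is O(E^3)
  have hf'T : (fun x => deriv f x - L1 x) =O[l] fun x => (x - α) ^ 3 := by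
    refine hT'3l.congr' ?_ EventuallyEq.rfl
    filter_upwards [hf'eqU] with x hx
    rw [hx]; ring
  set d3 : ℝ := 2 * c₃ - 2 * c₂ ^ 2 with hd3def
  -- Stage 1 : y x - α = c₂ E² + d3 E³ + O(E⁴)
  have hEp1 : (fun x => (x - α) - c₂ * (x - α) ^ 2 - d3 * (x - α) ^ 3) =O[l]
      fun x => (x - α) ^ 1 := by
    have := polyO (fun x => 1 - c₂ * (x - α) - d3 * (x - α) ^ 2) (by fun_prop) 1
    refine this.congr_left fun x => ?_
    ring
  have hNum1 : (fun x => (x - α) * deriv f x - f x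
      - (c₂ * (x - α) ^ 2 + d3 * (x - α) ^ 3) * deriv f x) =O[l] fun x => (x - α) ^ 4 := by
    have hpT' := mulO hEp1 hf'T
    have hQ1 : (fun x => ((x - α) - c₂ * (x - α) ^ 2 - d3 * (x - α) ^ 3) * L1 x - L x) =O[l]
        fun x => (x - α) ^ 4 := by
      have := polyO (fun x => a1 * ((4 * c₂ ^ 3 - 7 * c₂ * c₃)
        + (6 * c₂ ^ 2 * c₃ - 6 * c₃ ^ 2) * (x - α))) (by fun_prop) 4
      refine this.congr_left fun x => ?_
      simp only [hL1def, hLdef, hd3def]; ring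
    have hsum := (hpT'.add hQ1).sub hT4l
    refine hsum.congr_left fun x => ?_
    simp only [hTdef]; ring
  have heyfull : (fun x => (y x - α) - (c₂ * (x - α) ^ 2 + d3 * (x - α) ^ 3)) =O[l]
      fun x => (x - α) ^ 4 := by
    have hdiv := divO (by positivity : (0:ℝ) < |a1| / 2) hNum1 hf'low
    refine hdiv.congr' ?_ EventuallyEq.rfl
    filter_upwards [hf'ne] with x hx
    rw [hy x]
    field_simp
    ring
  have hey2 : (fun x => y x - α) =O[l] fun x => (x - α) ^ 2 := by
    have hp : (fun x => c₂ * (x - α) ^ 2 + d3 * (x - α) ^ 3) =O[l] fun x => (x - α) ^ 2 := by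
      have := polyO (fun x => c₂ + d3 * (x - α)) (by fun_prop) 2
      refine this.congr_left fun x => ?_; ring
    have := (weakO heyfull (by norm_num : 2 ≤ 4)).add hp
    refine this.congr_left fun x => ?_; ring
  -- Stage 2 : f (y x) expansions
  obtain ⟨CT4, hCT4pos, rT4, hrT4, hbT4⟩ := exB T 4 hT4
  have heysmall : ∀ ε : ℝ, 0 < ε → ∀ᶠ x in l, |y x - α| < ε :=
    fun ε hε => smallO (by norm_num) hey2 ε hε
  have hTy : (fun x => T (y x)) =O[l] fun x => (y x - α) ^ 4 := by
    rw [isBigO_iff]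
    refine ⟨CT4, ?_⟩
    filter_upwards [heysmall rT4 hrT4] with x hx
    rw [Real.norm_eq_abs, Real.norm_eq_abs, abs_pow]
    exact hbT4 (y x) hx
  have hey4pow : (fun x => (y x - α) ^ 4) =O[l] fun x => (x - α) ^ 8 := by
    have := hey2.pow 4
    refine this.trans (IsBigO.of_bound 1 ?_)
    filter_upwards with x
    simp [← pow_mul]
  have hey3pow : (fun x => (y x - α) ^ 3) =O[l] fun x => (x - α) ^ 6 := by
    have := hey2.pow 3
    refine this.trans (IsBigO.of_bound 1 ?_)
    filter_upwards with x
    simp [← pow_mul]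
  have hey2pow : (fun x => (y x - α) ^ 2) =O[l] fun x => (x - α) ^ 4 := by
    have := hey2.pow 2
    refine this.trans (IsBigO.of_bound 1 ?_)
    filter_upwards with x
    simp [← pow_mul]
  have hfy6 : (fun x => f (y x) - a1 * ((y x - α) + c₂ * (y x - α) ^ 2)) =O[l]
      fun x => (x - α) ^ 6 := by
    have h1 := (hey3pow.const_mul_left (a1 * c₃)).add (hTy.trans hey4pow |>.trans
      ((FD2Aux.isBigO_pow_pow (by norm_num : 6 ≤ 8)).mono hl))
    refine h1.congr_left fun x => ?_
    simp only [hTdef, hLdef]; ring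
  have hfy4 : (fun x => f (y x) - a1 * (c₂ * (x - α) ^ 2 + d3 * (x - α) ^ 3)) =O[l]
      fun x => (x - α) ^ 4 := by
    have h1 := (weakO hfy6 (by norm_num : 4 ≤ 6)).add (heyfull.const_mul_left a1)
    have h2 := h1.add (hey2pow.const_mul_left (a1 * c₂))
    refine h2.congr_left fun x => ?_
    ring
  have hfy2 : (fun x => f (y x)) =O[l] fun x => (x - α) ^ 2 := by
    have hp : (fun x => a1 * (c₂ * (x - α) ^ 2 + d3 * (x - α) ^ 3)) =O[l]
        fun x => (x - α) ^ 2 := by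
      have := polyO (fun x => a1 * (c₂ + d3 * (x - α))) (by fun_prop) 2
      refine this.congr_left fun x => ?_; ring
    have := (weakO hfy4 (by norm_num : 2 ≤ 4)).add hp
    refine this.congr_left fun x => ?_; ring
  -- Stage 3 : t₁ = f(y)/f(x)
  have hNum3 : (fun x => f (y x) - (c₂ * (x - α) + (2 * c₃ - 3 * c₂ ^ 2) * (x - α) ^ 2) * f x)
      =O[l] fun x => (x - α) ^ (3 + 1) := by
    have hp1 : (fun x => c₂ * (x - α) + (2 * c₃ - 3 * c₂ ^ 2) * (x - α) ^ 2) =O[l]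
        fun x => (x - α) ^ 1 := by
      have := polyO (fun x => c₂ + (2 * c₃ - 3 * c₂ ^ 2) * (x - α)) (by fun_prop) 1
      refine this.congr_left fun x => ?_; ring
    have hp1T := mulO hp1 (weakO hT4l (by norm_num : 3 ≤ 4))
    have hQ3 : (fun x => a1 * (c₂ * (x - α) ^ 2 + d3 * (x - α) ^ 3)
        - (c₂ * (x - α) + (2 * c₃ - 3 * c₂ ^ 2) * (x - α) ^ 2) * L x) =O[l]
        fun x => (x - α) ^ 4 := by
      have := polyO (fun x => a1 * ((3 * c₂ ^ 3 - 3 * c₂ * c₃)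
        + (3 * c₂ ^ 2 * c₃ - 2 * c₃ ^ 2) * (x - α))) (by fun_prop) 4
      refine this.congr_left fun x => ?_
      simp only [hLdef, hd3def]; ring
    have hsum := (hfy4.sub hp1T).add hQ3
    refine (show (4:ℕ) = 3 + 1 from rfl) ▸ hsum.congr_left fun x => ?_
    simp only [hTdef]; ring
  have ht1 : (fun x => f (y x) / f x - (c₂ * (x - α) + (2 * c₃ - 3 * c₂ ^ 2) * (x - α) ^ 2))
      =O[l] fun x => (x - α) ^ 3 := by
    have hdiv := divOE (by positivity : (0:ℝ) < |a1| / 2) hNum3 hflow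
    refine hdiv.congr' ?_ EventuallyEq.rfl
    filter_upwards [hmem] with x hx
    have hfx : f x ≠ 0 := hx.2.1
    field_simp
  have ht1O : (fun x => f (y x) / f x) =O[l] fun x => (x - α) ^ 1 := by
    have hp : (fun x => c₂ * (x - α) + (2 * c₃ - 3 * c₂ ^ 2) * (x - α) ^ 2) =O[l]
        fun x => (x - α) ^ 1 := by
      have := polyO (fun x => c₂ + (2 * c₃ - 3 * c₂ ^ 2) * (x - α)) (by fun_prop) 1
      refine this.congr_left fun x => ?_; ring
    have := (weakO ht1 (by norm_num : 1 ≤ 3)).add hp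
    refine this.congr_left fun x => ?_; ring
  have ht1small : ∀ ε : ℝ, 0 < ε → ∀ᶠ x in l, |f (y x) / f x| < ε :=
    fun ε hε => smallO (by norm_num) ht1O ε hε
  -- Stage 4 : A (t₁)
  have hSAt : (fun x => SA (f (y x) / f x)) =O[l] fun x => (x - α) ^ 2 := by
    have h1 : (fun x => SA (f (y x) / f x)) =O[l] fun x => (f (y x) / f x) ^ 2 := by
      rw [isBigO_iff]
      refine ⟨CA, ?_⟩
      filter_upwards [ht1small rA hrA] with x hx
      have := hballA _ (by simpa [Metric.mem_ball, Real.dist_eq] using hx)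
      simpa using this
    have h2 : (fun x => (f (y x) / f x) ^ 2) =O[l] fun x => (x - α) ^ 2 := by
      have := ht1O.pow 2
      refine this.trans (IsBigO.of_bound 1 ?_)
      filter_upwards with x
      simp [← pow_mul]
    exact h1.trans h2
  have hAt : (fun x => A (f (y x) / f x) - (1 + M₀ * c₂ * (x - α))) =O[l]
      fun x => (x - α) ^ 2 := by
    have hp : (fun x => M₀ * ((2 * c₃ - 3 * c₂ ^ 2) * (x - α) ^ 2)) =O[l]
        fun x => (x - α) ^ 2 := by
      have := polyO (fun x => M₀ * (2 * c₃ - 3 * c₂ ^ 2)) (by fun_prop) 2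
      refine this.congr_left fun x => ?_; ring
    have := (hSAt.add ((weakO ht1 (by norm_num : 2 ≤ 3)).const_mul_left M₀)).add hp
    refine this.congr_left fun x => ?_
    simp only [hSAdef]; ring
  -- Stage 5 : z x - α = u3 E³ + O(E⁴)
  have hNum5 : (fun x => (y x - α) * deriv f x - A (f (y x) / f x) * f (y x)
      - ((2 - M₀) * c₂ ^ 2) * (x - α) ^ 3 * deriv f x) =O[l] fun x => (x - α) ^ 4 := by
    have h1 := mulO hey2 (weakO hf'T (by norm_num : 2 ≤ 3))          -- ey * df' : E⁴
    have h2 := mulO hAt hfy2                                          -- dA * fy : E⁴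
    have h3 : (fun x => ((2 - M₀) * c₂ ^ 2) * (x - α) ^ 3 * (deriv f x - L1 x)) =O[l]
        fun x => (x - α) ^ 4 := by
      have hc : (fun x => ((2 - M₀) * c₂ ^ 2) * (x - α) ^ 3) =O[l] fun x => (x - α) ^ 1 := by
        have := polyO (fun x => ((2 - M₀) * c₂ ^ 2) * (x - α) ^ 2) (by fun_prop) 1
        refine this.congr_left fun x => ?_; ring
      exact mulO hc hf'T
    have h4 : (fun x => (1 + M₀ * c₂ * (x - α))
        * (f (y x) - a1 * (c₂ * (x - α) ^ 2 + d3 * (x - α) ^ 3))) =O[l]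
        fun x => (x - α) ^ 4 := by
      have hc : (fun x => 1 + M₀ * c₂ * (x - α)) =O[l] fun x => (x - α) ^ 0 := by
        have := polyO (fun x => 1 + M₀ * c₂ * (x - α)) (by fun_prop) 0
        refine this.congr_left fun x => ?_; ring
      exact mulO hc hfy4
    have h5 : (fun x => ((y x - α) - (c₂ * (x - α) ^ 2 + d3 * (x - α) ^ 3)) * L1 x) =O[l]
        fun x => (x - α) ^ 4 := by
      have hc : L1 =O[l] fun x => (x - α) ^ 0 := by
        have := polyO L1 (by simp only [hL1def]; fun_prop) 0
        refine this.congr_left fun x => ?_; ring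
      have := mulO heyfull hc
      simpa using this
    have hQ5 : (fun x => (c₂ * (x - α) ^ 2 + d3 * (x - α) ^ 3) * L1 x
        - (1 + M₀ * c₂ * (x - α)) * (a1 * (c₂ * (x - α) ^ 2 + d3 * (x - α) ^ 3))
        - ((2 - M₀) * c₂ ^ 2) * (x - α) ^ 3 * L1 x) =O[l] fun x => (x - α) ^ 4 := by
      have := polyO (fun x => a1 * ((7 * c₂ * c₃ - 2 * c₂ * c₃ * M₀ - 8 * c₂ ^ 3
        + 4 * c₂ ^ 3 * M₀) + (6 * c₃ ^ 2 - 12 * c₂ ^ 2 * c₃ + 3 * c₂ ^ 2 * c₃ * M₀)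
        * (x - α))) (by fun_prop) 4
      refine this.congr_left fun x => ?_
      simp only [hL1def, hd3def]; ring
    have hsum := ((((h1.sub h2).sub h3).sub h4).add h5).add hQ5
    refine hsum.congr_left fun x => ?_
    ring
  have hdez : (fun x => (z x - α) - ((2 - M₀) * c₂ ^ 2) * (x - α) ^ 3) =O[l]
      fun x => (x - α) ^ 4 := by
    have hdiv := divO (by positivity : (0:ℝ) < |a1| / 2) hNum5 hf'low
    refine hdiv.congr' ?_ EventuallyEq.rfl
    filter_upwards [hf'ne] with x hx
    rw [hz x, hy x]
    field_simp
    ring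
  have hez3 : (fun x => z x - α) =O[l] fun x => (x - α) ^ 3 := by
    have hp : (fun x => ((2 - M₀) * c₂ ^ 2) * (x - α) ^ 3) =O[l] fun x => (x - α) ^ 3 := by
      have := polyO (fun x => (2 - M₀) * c₂ ^ 2) (by fun_prop) 3
      refine this.congr_left fun x => ?_; ring
    have := (weakO hdez (by norm_num : 3 ≤ 4)).add hp
    refine this.congr_left fun x => ?_; ring
  have hez2 : (fun x => z x - α) =O[l] fun x => (x - α) ^ 2 := weakO hez3 (by norm_num)
  have hezsmall : ∀ ε : ℝ, 0 < ε → ∀ᶠ x in l, |z x - α| < ε :=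
    fun ε hε => smallO (by norm_num) hez3 ε hε
  -- Stage 6 : f (z x) expansion to E⁷
  have hez4pow : (fun x => (z x - α) ^ 4) =O[l] fun x => (x - α) ^ 8 := by
    have := hez2.pow 4
    refine this.trans (IsBigO.of_bound 1 ?_)
    filter_upwards with x
    simp [← pow_mul]
  have hez3pow : (fun x => (z x - α) ^ 3) =O[l] fun x => (x - α) ^ 9 := by
    have := hez3.pow 3
    refine this.trans (IsBigO.of_bound 1 ?_)
    filter_upwards with x
    simp [← pow_mul]
  have hTz : (fun x => T (z x)) =O[l] fun x => (z x - α) ^ 4 := by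
    rw [isBigO_iff]
    refine ⟨CT4, ?_⟩
    filter_upwards [hezsmall rT4 hrT4] with x hx
    rw [Real.norm_eq_abs, Real.norm_eq_abs, abs_pow]
    exact hbT4 (z x) hx
  have hfz7 : (fun x => f (z x) - a1 * ((z x - α) + c₂ * (z x - α) ^ 2)) =O[l]
      fun x => (x - α) ^ 7 := by
    have h1 := (weakO (hez3pow.const_mul_left (a1 * c₃)) (by norm_num : 7 ≤ 9)).add
      (weakO (hTz.trans hez4pow) (by norm_num : 7 ≤ 8))
    refine h1.congr_left fun x => ?_
    simp only [hTdef, hLdef]; ring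
  -- Stage 7 : z - y
  have hq2 : (fun x => z x - y x) =O[l] fun x => (x - α) ^ 2 := by
    have := hez2.sub hey2
    refine this.congr_left fun x => ?_; ring
  have hdq : (fun x => (z x - y x)
      - (-c₂ * (x - α) ^ 2 + ((2 - M₀) * c₂ ^ 2 - d3) * (x - α) ^ 3)) =O[l]
      fun x => (x - α) ^ 4 := by
    have := hdez.sub heyfull
    refine this.congr_left fun x => ?_; ring
  -- pointwise bounds for deriv T and deriv (deriv T)
  obtain ⟨CT3, hCT3pos, rT3, hrT3, hbT3⟩ := exB (deriv T) 3 hT'3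
  obtain ⟨CT2, hCT2pos, rT2, hrT2, hbT2⟩ := exB (deriv (deriv T)) 2 hT''2
  obtain ⟨rU, hrU, hballU⟩ := Metric.isOpen_iff.mp hU α hαU
  have hTdiff : ∀ w ∈ U, DifferentiableAt ℝ T w := fun w hw =>
    (hTC.contDiffAt (hU.mem_nhds hw)).differentiableAt hone
  have hT'diff : ∀ w ∈ U, DifferentiableAt ℝ (deriv T) w := fun w hw =>
    (hTC1.contDiffAt (hU.mem_nhds hw)).differentiableAt hone
  -- Stage 8 : first divided difference
  have hTzy : (fun x => (T (z x) - T (y x)) / (z x - y x)) =O[l]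
      fun x => (x - α) ^ 6 := by
    set ρ : ℝ := min rT3 rU with hρdef
    have hρ : 0 < ρ := lt_min hrT3 hrU
    have hdiffρ : ∀ w : ℝ, |w - α| < ρ → DifferentiableAt ℝ T w := by
      intro w hw
      refine hTdiff w (hballU ?_)
      rw [Metric.mem_ball, Real.dist_eq]
      exact lt_of_lt_of_le hw (min_le_right _ _)
    have hbρ : ∀ w : ℝ, |w - α| < ρ → |deriv T w| ≤ CT3 * |w - α| ^ 3 :=
      fun w hw => hbT3 w (lt_of_lt_of_le hw (min_le_left _ _))
    have hbig : (fun x => (T (z x) - T (y x)) / (z x - y x)) =O[l]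
        fun x => (|z x - α| + |y x - α|) ^ 3 := by
      rw [isBigO_iff]
      refine ⟨CT3, ?_⟩
      filter_upwards [heysmall (ρ / 2) (half_pos hρ), hezsmall (ρ / 2) (half_pos hρ),
        hmem] with x hy2 hz2 hxS
      have hkey := FD2Aux.div_diff_bound T α ρ CT3 3 hCT3pos.le hdiffρ hbρ
        (z x) (y x) hz2 hy2
      have hzy : z x - y x ≠ 0 := sub_ne_zero.mpr hxS.2.2.1
      rw [Real.norm_eq_abs, Real.norm_eq_abs, abs_pow, abs_div]
      rw [div_le_iff₀ (abs_pos.mpr hzy)]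
      refine hkey.trans (le_of_eq ?_)
      rw [abs_of_nonneg (by positivity : (0:ℝ) ≤ |z x - α| + |y x - α|)]
    have hsum : (fun x => |z x - α| + |y x - α|) =O[l] fun x => (x - α) ^ 2 := by
      have h1 : (fun x => |y x - α|) =O[l] fun x => (x - α) ^ 2 := by
        refine ((isBigO_norm_left (f' := fun x => y x - α)).mpr hey2).congr_left fun x => ?_
        simp [Real.norm_eq_abs]
      have h2 : (fun x => |z x - α|) =O[l] fun x => (x - α) ^ 2 := by
        refine ((isBigO_norm_left (f' := fun x => z x - α)).mpr hez2).congr_left fun x => ?_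
        simp [Real.norm_eq_abs]
      exact h2.add h1
    refine hbig.trans ?_
    have := hsum.pow 3
    refine this.trans (IsBigO.of_bound 1 ?_)
    filter_upwards with x
    simp [← pow_mul]
  have hP1 : (fun x => (f (z x) - f (y x)) / (z x - y x)
      - a1 * (1 + c₂ * ((z x - α) + (y x - α)))) =O[l] fun x => (x - α) ^ 4 := by
    have hterm : (fun x => a1 * c₃ * ((z x - α) ^ 2 + (z x - α) * (y x - α)
        + (y x - α) ^ 2)) =O[l] fun x => (x - α) ^ 4 := by
      have h1 := mulO hez2 hez2
      have h2 := mulO hez2 hey2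
      have h3 := mulO hey2 hey2
      have h0 := ((h1.add h2).add h3).const_mul_left (a1 * c₃)
      have h0' := weakO h0 (le_refl 4)
      refine h0'.congr_left fun x => ?_
      ring
    have hsum := hterm.add (weakO hTzy (by norm_num : 4 ≤ 6))
    refine hsum.congr' ?_ EventuallyEq.rfl
    filter_upwards [hmem] with x hx
    have hzy : z x - y x ≠ 0 := sub_ne_zero.mpr hx.2.2.1
    have key : f (z x) - f (y x) = (z x - y x) * (a1 * (1 + c₂ * ((z x - α) + (y x - α))
        + c₃ * ((z x - α) ^ 2 + (z x - α) * (y x - α) + (y x - α) ^ 2)))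
        + (T (z x) - T (y x)) := by
      simp only [hTdef, hLdef]; ring
    rw [key, add_div, mul_div_cancel_left₀ _ hzy]
    ring
  -- Stage 9 : second divided difference
  have hT9 : (fun x => (T (z x) - T x - deriv T x * (z x - x)) / (z x - x) ^ 2) =O[l]
      fun x => (x - α) ^ 2 := by
    set ρ : ℝ := min rT2 rU with hρdef
    have hρ : 0 < ρ := lt_min hrT2 hrU
    have hdiffρ : ∀ w : ℝ, |w - α| < ρ → DifferentiableAt ℝ T w := by
      intro w hw
      refine hTdiff w (hballU ?_)
      rw [Metric.mem_ball, Real.dist_eq]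
      exact lt_of_lt_of_le hw (min_le_right _ _)
    have hdiffρ' : ∀ w : ℝ, |w - α| < ρ → DifferentiableAt ℝ (deriv T) w := by
      intro w hw
      refine hT'diff w (hballU ?_)
      rw [Metric.mem_ball, Real.dist_eq]
      exact lt_of_lt_of_le hw (min_le_right _ _)
    have hbρ : ∀ w : ℝ, |w - α| < ρ → |deriv (deriv T) w| ≤ CT2 * |w - α| ^ 2 :=
      fun w hw => hbT2 w (lt_of_lt_of_le hw (min_le_left _ _))
    have hbig : (fun x => (T (z x) - T x - deriv T x * (z x - x)) / (z x - x) ^ 2) =O[l]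
        fun x => (|z x - α| + |x - α|) ^ 2 := by
      rw [isBigO_iff]
      refine ⟨CT2, ?_⟩
      filter_upwards [hezsmall (ρ / 2) (half_pos hρ), eaball (ρ / 2) (half_pos hρ),
        hmem] with x hz2 hx2 hxS
      have hkey := FD2Aux.taylor1_bound T α ρ CT2 2 hCT2pos.le hdiffρ hdiffρ' hbρ
        (z x) x hz2 hx2
      have hzx : z x - x ≠ 0 := sub_ne_zero.mpr hxS.2.2.2.1
      rw [Real.norm_eq_abs, Real.norm_eq_abs, abs_div, abs_pow, abs_pow]
      rw [div_le_iff₀ (by positivity)]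
      refine hkey.trans (le_of_eq ?_)
      rw [abs_of_nonneg (show (0:ℝ) ≤ |z x - α| + |x - α| by positivity)]
    have hsum : (fun x => |z x - α| + |x - α|) =O[l] fun x => (x - α) ^ 1 := by
      have h1 : (fun x => |z x - α|) =O[l] fun x => (x - α) ^ 1 := by
        refine ((isBigO_norm_left (f' := fun x => z x - α)).mpr
          (weakO hez3 (by norm_num))).congr_left fun x => ?_
        simp [Real.norm_eq_abs]
      have h2 : (fun x => |x - α|) =O[l] fun x => (x - α) ^ 1 := by
        refine ((isBigO_norm_left (f' := fun x => x - α)).mpr ?_).congr_left fun x => ?_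
        · simpa using isBigO_refl (fun x : ℝ => x - α) l
        · simp [Real.norm_eq_abs]
      exact h1.add h2
    refine hbig.trans ?_
    have := hsum.pow 2
    refine this.trans (IsBigO.of_bound 1 ?_)
    filter_upwards with x
    simp [← pow_mul]
  have hP2 : (fun x => ((f (z x) - f x) / (z x - x) - deriv f x) / (z x - x)
      - a1 * (c₂ + c₃ * ((z x - α) + 2 * (x - α)))) =O[l] fun x => (x - α) ^ 2 := by
    refine hT9.congr' ?_ EventuallyEq.rfl
    filter_upwards [hmem, hl (hU.mem_nhds hαU)] with x hxS hxU
    have hzx : z x - x ≠ 0 := sub_ne_zero.mpr hxS.2.2.2.1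
    have hf'x : deriv f x = L1 x + deriv T x := by rw [hdT x hxU]; ring
    have key : f (z x) - f x = (z x - x) * L1 x
        + (z x - x) ^ 2 * (a1 * (c₂ + c₃ * ((z x - α) + 2 * (x - α))))
        + (T (z x) - T x) := by
      simp only [hTdef, hLdef, hL1def]; ring
    rw [key, hf'x]
    field_simp
    ring
  -- Stage 10 : expansion of D
  have hE1 : (fun x : ℝ => x - α) =O[l] fun x => (x - α) ^ 1 := by
    simpa using isBigO_refl (fun x : ℝ => x - α) l
  have hdD : (fun x => D x - a1 * (1 + (2 * c₂ * ((2 - M₀) * c₂ ^ 2) - 2 * c₂ * c₃)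
      * (x - α) ^ 3)) =O[l] fun x => (x - α) ^ 4 := by
    have b1 := hdez.const_mul_left (a1 * (2 * c₂))
    have b2 := (mulO hez2 hez2).const_mul_left (a1 * c₃)
    have b3 := (mulO hez2 hey2).const_mul_left (a1 * c₃)
    have b4 := (mulO hE1 hez3).const_mul_left (a1 * (2 * c₃))
    have b5 : (fun x => a1 * (2 * c₃ * d3) * (x - α) ^ 4) =O[l] fun x => (x - α) ^ 4 := by
      have := polyO (fun _ => a1 * (2 * c₃ * d3)) (by fun_prop) 4
      refine this.congr_left fun x => ?_; ring
    have b6 := weakO ((mulO hE1 heyfull).const_mul_left (a1 * (2 * c₃)))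
      (by norm_num : 4 ≤ 5)
    have hsum := ((((((hP1.add (mulO hP2 hq2)).add b1).add b2).sub b3).add b4).sub b5).sub b6
    refine hsum.congr_left fun x => ?_
    rw [hD x]
    simp only [hd3def]
    ring
  have hDtend : Tendsto D l (𝓝 a1) := by
    have h0 : Tendsto (fun x => D x - a1 * (1 + (2 * c₂ * ((2 - M₀) * c₂ ^ 2) - 2 * c₂ * c₃)
        * (x - α) ^ 3)) l (𝓝 0) := by
      refine hdD.trans_tendsto ?_
      have := EtendO.pow 4
      simpa using this
    have h1 : Tendsto (fun x => a1 * (1 + (2 * c₂ * ((2 - M₀) * c₂ ^ 2) - 2 * c₂ * c₃)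
        * (x - α) ^ 3)) l (𝓝 a1) := by
      have h2 : Tendsto (fun x => (x - α) ^ 3) l (𝓝 0) := by
        have := EtendO.pow 3
        simpa using this
      have := ((h2.const_mul (2 * c₂ * ((2 - M₀) * c₂ ^ 2) - 2 * c₂ * c₃)).const_add 1).const_mul a1
      simpa using this
    have := h0.add h1
    simpa using this
  have hDlow : ∀ᶠ x in l, |a1| / 2 ≤ |D x| := by
    have hev := Metric.tendsto_nhds.mp hDtend (|a1| / 2) (by positivity)
    filter_upwards [hev] with x hx
    rw [Real.dist_eq] at hx
    have h1 := abs_sub_abs_le_abs_sub a1 (D x)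
    have h2 : |a1 - D x| = |D x - a1| := abs_sub_comm _ _
    linarith
  -- Stage 11 : final assembly
  have hNum11 : (fun x => (z x - α) * D x - f (z x)
      - (c₂ ^ 3 * (M₀ - 2) * (M₀ * c₂ ^ 2 + 2 * c₃ - 2 * c₂ ^ 2)) * (x - α) ^ 6 * D x)
      =O[l] fun x => (x - α) ^ 7 := by
    have n1 := mulO hez3 hdD
    have n3 : (fun x => (c₂ ^ 3 * (M₀ - 2) * (M₀ * c₂ ^ 2 + 2 * c₃ - 2 * c₂ ^ 2)) * (x - α) ^ 6
        * (D x - a1 * (1 + (2 * c₂ * ((2 - M₀) * c₂ ^ 2) - 2 * c₂ * c₃) * (x - α) ^ 3)))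
        =O[l] fun x => (x - α) ^ 7 := by
      have hc : (fun x => (c₂ ^ 3 * (M₀ - 2) * (M₀ * c₂ ^ 2 + 2 * c₃ - 2 * c₂ ^ 2))
          * (x - α) ^ 6) =O[l] fun x => (x - α) ^ 6 := by
        have := polyO (fun _ => c₂ ^ 3 * (M₀ - 2) * (M₀ * c₂ ^ 2 + 2 * c₃ - 2 * c₂ ^ 2))
          (by fun_prop) 6
        refine this.congr_left fun x => ?_; ring
      have := mulO hc (weakO hdD (by norm_num : 1 ≤ 4))
      exact this
    have n4 : (fun x => a1 * ((2 * c₂ * ((2 - M₀) * c₂ ^ 2) - 2 * c₂ * c₃)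
        - 2 * c₂ * ((2 - M₀) * c₂ ^ 2)) * (x - α) ^ 3
        * ((z x - α) - ((2 - M₀) * c₂ ^ 2) * (x - α) ^ 3)) =O[l]
        fun x => (x - α) ^ 7 := by
      have hc : (fun x => a1 * ((2 * c₂ * ((2 - M₀) * c₂ ^ 2) - 2 * c₂ * c₃)
          - 2 * c₂ * ((2 - M₀) * c₂ ^ 2)) * (x - α) ^ 3) =O[l] fun x => (x - α) ^ 3 := by
        have := polyO (fun _ => a1 * ((2 * c₂ * ((2 - M₀) * c₂ ^ 2) - 2 * c₂ * c₃)
          - 2 * c₂ * ((2 - M₀) * c₂ ^ 2))) (by fun_prop) 3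
        refine this.congr_left fun x => ?_; ring
      exact mulO hc hdez
    have n6 := weakO ((mulO hdez hdez).const_mul_left (a1 * c₂)) (by norm_num : 7 ≤ 8)
    have n7 : (fun x => a1 * (c₂ ^ 3 * (M₀ - 2) * (M₀ * c₂ ^ 2 + 2 * c₃ - 2 * c₂ ^ 2))
        * (2 * c₂ * ((2 - M₀) * c₂ ^ 2) - 2 * c₂ * c₃) * (x - α) ^ 9) =O[l]
        fun x => (x - α) ^ 7 := by
      have := polyO (fun x => a1 * (c₂ ^ 3 * (M₀ - 2) * (M₀ * c₂ ^ 2 + 2 * c₃ - 2 * c₂ ^ 2))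
        * (2 * c₂ * ((2 - M₀) * c₂ ^ 2) - 2 * c₂ * c₃) * (x - α) ^ 2) (by fun_prop) 7
      refine this.congr_left fun x => ?_; ring
    have hsum := ((((n1.sub hfz7).sub n3).add n4).sub n6).sub n7
    refine hsum.congr_left fun x => ?_
    ring
  have hfinal := divO (by positivity : (0:ℝ) < |a1| / 2) hNum11 hDlow
  have hgoal : (fun x => Φ x - α - c₂ ^ 3 * (M₀ - 2) * (M₀ * c₂ ^ 2 + 2 * c₃ - 2 * c₂ ^ 2)
      * (x - α) ^ 6) =O[l] fun x => (x - α) ^ 7 := by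
    refine hfinal.congr' ?_ EventuallyEq.rfl
    filter_upwards [hmem] with x hx
    have hDx : D x ≠ 0 := hx.2.2.2.2
    rw [hΦ x]
    field_simp
    ring
  exact hgoal
end

section
/- Let f : ℝ → ℝ be C^∞ on an open set containing α, with f(α) = 0 and f'(α) ≠ 0, and let A : ℝ → ℝ be C^∞ with A(0) = 1. Set c₂ = f''(α)/(2 f'(α)). For x near α define y(x) = x − f(x)/f'(x) and z(x) = y(x) − A(f(y(x))/f(x))·f(y(x))/f'(x). Then z(x) − α = (2 − A'(0))·c₂²·(x − α)³ + O((x − α)⁴) as x → α through points x ≠ α with f(x) ≠ 0; in particular the two-step scheme has order at least three, and order at least four when A'(0) = 2. -/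
open Topology Filter Asymptotics

theorem taylor_isBigO : ∀ (n : ℕ) {f : ℝ → ℝ} {U : Set ℝ}, IsOpen U → ∀ {a : ℝ}, a ∈ U →
    ContDiffOn ℝ (⊤ : ℕ∞) f U →
    (fun x => f x - ∑ k ∈ Finset.range (n+1),
        iteratedDeriv k f a / (k.factorial : ℝ) * (x - a)^k)
      =O[𝓝 a] fun x => (x - a)^(n+1) := by
  intro n
  induction n with
  | zero =>
    intro f U hU a ha hf
    have hd : HasDerivAt f (deriv f a) a :=
      ((hf.contDiffAt (hU.mem_nhds ha)).differentiableAt (by simp)).hasDerivAt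
    have h1 : (fun x => f x - f a) =O[𝓝 a] fun x => x - a :=
      hd.hasFDerivAt.isBigO_sub
    simpa using h1
  | succ n ih =>
    intro f U hU a ha hf
    have hf' : ContDiffOn ℝ (⊤ : ℕ∞) (deriv f) U :=
      ((contDiffOn_infty_iff_deriv_of_isOpen hU).mp hf).2
    obtain ⟨C, hC⟩ := (ih hU ha hf').bound
    have hUb : ∀ᶠ x in 𝓝 a, x ∈ U := hU.eventually_mem ha
    obtain ⟨ε, hε, hb⟩ := Metric.eventually_nhds_iff.mp (hC.and hUb)
    set P : ℝ → ℝ := fun t => ∑ k ∈ Finset.range (n+2),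
        iteratedDeriv k f a / (k.factorial : ℝ) * (t - a)^k with hP
    set Pd : ℝ → ℝ := fun t => ∑ k ∈ Finset.range (n+1),
        iteratedDeriv k (deriv f) a / (k.factorial : ℝ) * (t - a)^k with hPd
    have hPder : ∀ t : ℝ, HasDerivAt P (Pd t) t := by
      intro t
      have h1 : HasDerivAt P (∑ k ∈ Finset.range (n+2),
          iteratedDeriv k f a / (k.factorial : ℝ) * ((k : ℝ) * (t - a)^(k-1))) t := by
        apply HasDerivAt.fun_sum
        intro k _
        have h2 : HasDerivAt (fun x : ℝ => (x - a)^k) ((k : ℝ) * (t - a)^(k-1)) t := by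
          simpa [Function.comp_def] using ((hasDerivAt_pow k (t - a)).comp t ((hasDerivAt_id t).sub_const a))
        exact h2.const_mul _
      convert h1 using 1
      rw [hPd, Finset.sum_range_succ']
      simp only [Nat.cast_zero, zero_mul, mul_zero, add_zero]
      apply Finset.sum_congr rfl
      intro i _
      rw [← iteratedDeriv_succ']
      have hfac : ((i+1).factorial : ℝ) = (i+1) * (i.factorial : ℝ) := by
        exact_mod_cast Nat.factorial_succ i
      have h0 : ((i.factorial : ℝ)) ≠ 0 := by positivity
      rw [hfac]
      push_cast
      field_simp
    rw [isBigO_iff]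
    refine ⟨|C|, Metric.eventually_nhds_iff.mpr ⟨ε, hε, fun x hx => ?_⟩⟩
    set s := Metric.closedBall a (dist x a) with hs
    have hsub : ∀ t ∈ s, dist t a < ε := fun t ht =>
      lt_of_le_of_lt (Metric.mem_closedBall.mp ht) hx
    have hder : ∀ t ∈ s, HasDerivWithinAt (fun u => f u - P u) (deriv f t - Pd t) s t := by
      intro t ht
      have hfd : HasDerivAt f (deriv f t) t :=
        ((hf.contDiffAt (hU.mem_nhds (hb (hsub t ht)).2)).differentiableAt
          (by simp)).hasDerivAt
      exact (hfd.sub (hPder t)).hasDerivWithinAt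
    have hbound : ∀ t ∈ s, ‖deriv f t - Pd t‖ ≤ |C| * |x - a|^(n+1) := by
      intro t ht
      have h1 := (hb (hsub t ht)).1
      have h2 : ‖(t - a)^(n+1)‖ = |t - a|^(n+1) := by rw [Real.norm_eq_abs, abs_pow]
      have h3 : |t - a| ≤ |x - a| := by
        have := Metric.mem_closedBall.mp ht
        rwa [Real.dist_eq, Real.dist_eq] at this
      calc ‖deriv f t - Pd t‖ ≤ C * ‖(t - a)^(n+1)‖ := h1
        _ ≤ |C| * |t - a|^(n+1) := by
            rw [h2]; exact mul_le_mul_of_nonneg_right (le_abs_self C) (by positivity)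
        _ ≤ |C| * |x - a|^(n+1) :=
            mul_le_mul_of_nonneg_left (pow_le_pow_left₀ (abs_nonneg _) h3 _) (abs_nonneg C)
    have hxs : x ∈ s := by simp [hs]
    have has : a ∈ s := Metric.mem_closedBall_self dist_nonneg
    have hmvt := Convex.norm_image_sub_le_of_norm_hasDerivWithin_le hder hbound
      (convex_closedBall _ _) has hxs
    have hga : f a - P a = 0 := by
      rw [hP]
      simp only [sub_self]
      rw [Finset.sum_eq_single 0 (fun k _ hk => by simp [zero_pow hk]) (by simp)]
      simp
    rw [hga, sub_zero] at hmvt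
    calc ‖f x - P x‖ ≤ |C| * |x - a|^(n+1) * ‖x - a‖ := hmvt
      _ = |C| * ‖(x - a)^(n+2)‖ := by
          rw [Real.norm_eq_abs, Real.norm_eq_abs, abs_pow]
          ring

lemma fd2_div_isBigO {l : Filter ℝ} {N D g : ℝ → ℝ} (hN : N =O[l] g)
    (hD : (fun x => (D x)⁻¹) =O[l] fun _ => (1:ℝ)) :
    (fun x => N x / D x) =O[l] g := by
  simpa [div_eq_mul_inv] using hN.mul hD

lemma fd2_pow_isBigO {a : ℝ} {l : Filter ℝ} (hl : l ≤ 𝓝 a) {k m : ℕ} (h : k ≤ m) :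
    (fun x : ℝ => (x - a)^m) =O[l] fun x => (x - a)^k := by
  rw [isBigO_iff]
  refine ⟨1, ?_⟩
  have h1 : ∀ᶠ x in 𝓝 a, |x - a| ≤ 1 :=
    Metric.eventually_nhds_iff.mpr ⟨1, one_pos, fun y hy => le_of_lt (by rwa [Real.dist_eq] at hy)⟩
  filter_upwards [hl h1] with x hx
  rw [Real.norm_eq_abs, Real.norm_eq_abs, abs_pow, abs_pow, one_mul]
  exact pow_le_pow_of_le_one (abs_nonneg _) hx h

lemma fd2_trans_pow {a : ℝ} {l : Filter ℝ} (hl : l ≤ 𝓝 a) {g : ℝ → ℝ} {m k : ℕ}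
    (h : g =O[l] fun x => (x - a)^m) (hk : k ≤ m) : g =O[l] fun x => (x - a)^k :=
  h.trans (fd2_pow_isBigO hl hk)

lemma fd2_mul_pow {a : ℝ} {l : Filter ℝ} {g h : ℝ → ℝ} {m k : ℕ}
    (hg : g =O[l] fun x => (x - a)^m) (hh : h =O[l] fun x => (x - a)^k) :
    (fun x => g x * h x) =O[l] fun x => (x - a)^(m + k) :=
  (hg.mul hh).congr (fun _ => rfl) fun x => (pow_add _ _ _).symm

lemma fd2_cont_mul_pow {a : ℝ} {l : Filter ℝ} (hl : l ≤ 𝓝 a) {p : ℝ → ℝ} (hp : Continuous p)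
    (k : ℕ) : (fun x => (x - a)^k * p x) =O[l] fun x => (x - a)^k := by
  have h1 : p =O[l] (fun _ => (1:ℝ)) := Tendsto.isBigO_one ℝ ((hp.tendsto a).mono_left hl)
  simpa using (isBigO_refl (fun x : ℝ => (x - a)^k) l).mul h1

lemma fd2_div_pow {a : ℝ} {l : Filter ℝ} (hne : ∀ᶠ x in l, x ≠ a) {N : ℝ → ℝ} {m k : ℕ}
    (h : N =O[l] fun x => (x - a)^m) (hk : k ≤ m) :
    (fun x => N x / (x - a)^k) =O[l] fun x => (x - a)^(m - k) := by
  have h2 := h.mul (isBigO_refl (fun x : ℝ => ((x - a)^k)⁻¹) l)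
  refine h2.congr' (Eventually.of_forall fun x => (div_eq_mul_inv _ _).symm) ?_
  filter_upwards [hne] with x hx
  rw [← pow_sub₀ _ (sub_ne_zero.mpr hx) hk]

theorem fd2_main
    (f A : ℝ → ℝ) (α : ℝ)
    (U : Set ℝ) (hU : IsOpen U) (hαU : α ∈ U)
    (hf : ContDiffOn ℝ (⊤ : ℕ∞) f U)
    (hroot : f α = 0) (hf'α : deriv f α ≠ 0)
    (hA : ContDiff ℝ (⊤ : ℕ∞) A) (hA0 : A 0 = 1)
    (c₂ : ℝ) (hc₂ : c₂ = iteratedDeriv 2 f α / (2 * deriv f α))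
    (y z : ℝ → ℝ)
    (hy : ∀ x, y x = x - f x / deriv f x)
    (hz : ∀ x, z x = y x - A (f (y x) / f x) * (f (y x) / deriv f x)) :
    ((fun x => z x - α - (2 - deriv A 0) * c₂ ^ 2 * (x - α) ^ 3)
        =O[𝓝[{x : ℝ | x ≠ α ∧ f x ≠ 0}] α] (fun x => (x - α) ^ 4)) := by
  have hfi : ContDiffOn ℝ (⊤ : ℕ∞) f U := hf.of_le (by simp)
  have hAi : ContDiffOn ℝ (⊤ : ℕ∞) A Set.univ := (hA.of_le (by simp)).contDiffOn
  set d := deriv f α with hd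
  set a1 := deriv A 0 with ha1
  set c3 : ℝ := iteratedDeriv 3 f α / (6 * d) with hc3
  set L := 𝓝[{x : ℝ | x ≠ α ∧ f x ≠ 0}] α with hLdef
  have hLle : L ≤ 𝓝 α := nhdsWithin_le_nhds
  have hmem : ∀ᶠ x in L, x ≠ α ∧ f x ≠ 0 := eventually_mem_nhdsWithin
  have hxne : ∀ᶠ x in L, x ≠ α := hmem.mono fun x h => h.1
  have hfne : ∀ᶠ x in L, f x ≠ 0 := hmem.mono fun x h => h.2
  have hf' : ContDiffOn ℝ (⊤ : ℕ∞) (deriv f) U :=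
    ((contDiffOn_infty_iff_deriv_of_isOpen hU).mp hfi).2
  -- Taylor expansion of f to order 3
  have hr1 : (fun x => f x - (d*(x-α) + d*c₂*(x-α)^2 + d*c3*(x-α)^3)) =O[L]
      fun x => (x-α)^4 := by
    have h := (taylor_isBigO 3 hU hαU hfi).mono hLle
    refine h.congr_left fun x => ?_
    rw [Finset.sum_range_succ, Finset.sum_range_succ, Finset.sum_range_succ,
      Finset.sum_range_one]
    simp only [iteratedDeriv_zero, iteratedDeriv_one, hroot, pow_zero, Nat.factorial]
    rw [hc₂, hc3]
    field_simp
    ring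
  -- Taylor expansion of deriv f to order 2
  have hr2 : (fun x => deriv f x - (d + 2*d*c₂*(x-α) + 3*d*c3*(x-α)^2)) =O[L]
      fun x => (x-α)^3 := by
    have h := (taylor_isBigO 2 hU hαU hf').mono hLle
    refine h.congr_left fun x => ?_
    rw [Finset.sum_range_succ, Finset.sum_range_succ, Finset.sum_range_one]
    have e1 : iteratedDeriv 0 (deriv f) α = d := by rw [iteratedDeriv_zero]
    have e2 : iteratedDeriv 1 (deriv f) α = iteratedDeriv 2 f α := by
      rw [← iteratedDeriv_succ']
    have e3 : iteratedDeriv 2 (deriv f) α = iteratedDeriv 3 f α := by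
      rw [← iteratedDeriv_succ']
    rw [e1, e2, e3]
    simp only [pow_zero, Nat.factorial]
    rw [hc₂, hc3]
    field_simp
    ring
  -- Taylor expansion of A at 0 to order 1
  have hrA0 : (fun s => A s - (1 + a1*s)) =O[𝓝 0] fun s => s^2 := by
    have h := taylor_isBigO 1 isOpen_univ (Set.mem_univ (0:ℝ)) hAi
    simp only [sub_zero] at h
    refine (h.congr_left fun s => ?_).congr_right fun s => by norm_num
    rw [Finset.sum_range_succ, Finset.sum_range_one]
    simp only [iteratedDeriv_zero, iteratedDeriv_one, hA0, pow_zero, Nat.factorial]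
    push_cast
    ring
  -- continuity of deriv f and nonvanishing
  have hdercont : ContinuousAt (deriv f) α :=
    (hf'.continuousOn.continuousAt (hU.mem_nhds hαU))
  have htendd : Tendsto (deriv f) L (𝓝 d) := hdercont.tendsto.mono_left hLle
  have hf'ne : ∀ᶠ x in L, deriv f x ≠ 0 := htendd.eventually_ne hf'α
  have hinvf' : (fun x => (deriv f x)⁻¹) =O[L] (fun _ => (1:ℝ)) :=
    Tendsto.isBigO_one ℝ (htendd.inv₀ hf'α)
  -- expansion of y - α
  set Q1 : ℝ → ℝ := fun x => c₂*(x-α)^2 + (2*c3 - 2*c₂^2)*(x-α)^3 with hQ1def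
  have hQ1O : Q1 =O[L] fun x => (x-α)^2 := by
    have h := fd2_cont_mul_pow hLle (p := fun x => c₂ + (2*c3 - 2*c₂^2)*(x-α))
      (by fun_prop) 2 (a := α)
    refine h.congr_left fun x => by rw [hQ1def]; ring
  have hN1 : (fun x => (x-α) * deriv f x - f x - deriv f x * Q1 x) =O[L]
      fun x => (x-α)^4 := by
    have hid : ∀ x, (x-α) * deriv f x - f x - deriv f x * Q1 x
        = (x-α) * (deriv f x - (d + 2*d*c₂*(x-α) + 3*d*c3*(x-α)^2))
          - (f x - (d*(x-α) + d*c₂*(x-α)^2 + d*c3*(x-α)^3))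
          - (deriv f x - (d + 2*d*c₂*(x-α) + 3*d*c3*(x-α)^2)) * Q1 x
          - (x-α)^4 * ((d*(7*c₂*c3 - 4*c₂^3)) + (d*(6*c3^2 - 6*c₂^2*c3))*(x-α)) := by
      intro x; rw [hQ1def]; ring
    refine IsBigO.congr_left ?_ fun x => (hid x).symm
    have h1 : (fun x => (x-α) * (deriv f x - (d + 2*d*c₂*(x-α) + 3*d*c3*(x-α)^2)))
        =O[L] fun x => (x-α)^4 := by
      have := fd2_mul_pow (a := α) (m := 1) (k := 3)
        ((isBigO_refl (fun x : ℝ => x - α) L).congr_right fun x => (pow_one _).symm) hr2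
      exact this
    have h2 : (fun x => (deriv f x - (d + 2*d*c₂*(x-α) + 3*d*c3*(x-α)^2)) * Q1 x)
        =O[L] fun x => (x-α)^4 := fd2_trans_pow hLle (fd2_mul_pow hr2 hQ1O) (by norm_num)
    have h3 : (fun x => (x-α)^4 * ((d*(7*c₂*c3 - 4*c₂^3)) + (d*(6*c3^2 - 6*c₂^2*c3))*(x-α)))
        =O[L] fun x => (x-α)^4 := fd2_cont_mul_pow hLle (by fun_prop) 4
    exact ((h1.sub hr1).sub h2).sub h3
  have hs1 : (fun x => y x - α - Q1 x) =O[L] fun x => (x-α)^4 := by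
    have heq : ∀ᶠ x in L, y x - α - Q1 x
        = ((x-α) * deriv f x - f x - deriv f x * Q1 x) / deriv f x := by
      filter_upwards [hf'ne] with x hx
      rw [hy x]; field_simp; ring
    exact (fd2_div_isBigO hN1 hinvf').congr' (EventuallyEq.symm heq) (EventuallyEq.refl _ _)
  have hu2 : (fun x => y x - α) =O[L] fun x => (x-α)^2 := by
    have := hQ1O.add (fd2_trans_pow hLle hs1 (by norm_num : 2 ≤ 4))
    exact this.congr_left fun x => by ring
  have hytend : Tendsto y L (𝓝 α) := by
    have h0 : Tendsto (fun x : ℝ => (x-α)^2) L (𝓝 0) := by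
      have h : Continuous (fun x : ℝ => (x-α)^2) := by fun_prop
      have := (h.tendsto α).mono_left hLle
      simpa using this
    have h1 := hu2.trans_tendsto h0
    have h2 := h1.add_const α
    simpa using h2
  -- expansion of f ∘ y
  have hfy0 : (fun w => f w - (d*(w-α) + d*c₂*(w-α)^2)) =O[𝓝 α] fun w => (w-α)^3 := by
    have h := taylor_isBigO 2 hU hαU hfi
    refine h.congr_left fun x => ?_
    rw [Finset.sum_range_succ, Finset.sum_range_succ, Finset.sum_range_one]
    simp only [iteratedDeriv_zero, iteratedDeriv_one, hroot, pow_zero, Nat.factorial]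
    rw [hc₂]
    field_simp
    ring
  have hr3 : (fun x => f (y x) - (d*(y x-α) + d*c₂*(y x-α)^2)) =O[L]
      fun x => (y x - α)^3 := hfy0.comp_tendsto hytend
  have hu3 : (fun x => (y x - α)^3) =O[L] fun x => (x-α)^4 := by
    have := (hu2.pow 3).congr_right (fun x => by rw [← pow_mul])
    exact fd2_trans_pow hLle this (by norm_num)
  have hu2sq : (fun x => (y x - α)^2) =O[L] fun x => (x-α)^4 := by
    exact (hu2.pow 2).congr_right (fun x => by rw [← pow_mul])
  have hrFY : (fun x => f (y x) - (d*c₂*(x-α)^2 + d*(2*c3-2*c₂^2)*(x-α)^3)) =O[L]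
      fun x => (x-α)^4 := by
    have hid : ∀ x, f (y x) - (d*c₂*(x-α)^2 + d*(2*c3-2*c₂^2)*(x-α)^3)
        = d*(y x - α - Q1 x) + d*c₂*(y x - α)^2
          + (f (y x) - (d*(y x-α) + d*c₂*(y x-α)^2)) := by
      intro x; rw [hQ1def]; ring
    refine IsBigO.congr_left ?_ fun x => (hid x).symm
    exact ((hs1.const_mul_left d).add (hu2sq.const_mul_left (d*c₂))).add (hr3.trans hu3)
  -- behaviour of f x / (x - α)
  have hfde : (fun x => f x / (x-α) - d) =O[L] fun x => (x-α) := by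
    have hnum : (fun x => f x - d*(x-α)) =O[L] fun x => (x-α)^2 := by
      have hid : ∀ x, f x - d*(x-α)
          = (f x - (d*(x-α) + d*c₂*(x-α)^2 + d*c3*(x-α)^3))
            + (x-α)^2 * (d*c₂ + d*c3*(x-α)) := by intro x; ring
      refine IsBigO.congr_left ?_ fun x => (hid x).symm
      exact (fd2_trans_pow hLle hr1 (by norm_num)).add
        (fd2_cont_mul_pow hLle (by fun_prop) 2)
    have h := fd2_div_pow hxne hnum (by norm_num : 1 ≤ 2)
    refine (h.congr' ?_ (EventuallyEq.refl _ _)).congr_right fun x => by norm_num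
    filter_upwards [hxne] with x hx
    rw [pow_one, sub_div, mul_div_assoc, div_self (sub_ne_zero.mpr hx), mul_one]
  have htfe : Tendsto (fun x => f x / (x-α)) L (𝓝 d) := by
    have h0 : Tendsto (fun x : ℝ => x - α) L (𝓝 0) := by
      have h : Continuous (fun x : ℝ => x - α) := by fun_prop
      have := (h.tendsto α).mono_left hLle
      simpa using this
    have h1 := hfde.trans_tendsto h0
    have h2 := h1.add_const d
    simpa using h2
  have hef : (fun x => (x-α) / f x) =O[L] (fun _ => (1:ℝ)) := by
    have h1 : Tendsto (fun x => (f x / (x-α))⁻¹) L (𝓝 d⁻¹) := htfe.inv₀ hf'α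
    have h2 : Tendsto (fun x => (x-α) / f x) L (𝓝 d⁻¹) := by
      refine h1.congr fun x => ?_
      rw [inv_div]
    exact Tendsto.isBigO_one ℝ h2
  -- expansion of t = f(y)/f
  have hM : (fun x => f (y x) - c₂*(x-α)*f x) =O[L] fun x => (x-α)^3 := by
    have hid : ∀ x, f (y x) - c₂*(x-α)*f x
        = (f (y x) - (d*c₂*(x-α)^2 + d*(2*c3-2*c₂^2)*(x-α)^3))
          - c₂*(x-α)*(f x - (d*(x-α) + d*c₂*(x-α)^2 + d*c3*(x-α)^3))
          + (x-α)^3 * (d*(2*c3-3*c₂^2) - d*c₂*c3*(x-α)) := by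
      intro x; ring
    refine IsBigO.congr_left ?_ fun x => (hid x).symm
    have h2 : (fun x => c₂*(x-α)*(f x - (d*(x-α) + d*c₂*(x-α)^2 + d*c3*(x-α)^3)))
        =O[L] fun x => (x-α)^3 := by
      have hc : (fun x : ℝ => c₂*(x-α)) =O[L] fun x => (x-α)^1 := by
        refine (fd2_cont_mul_pow hLle (p := fun _ => c₂) continuous_const 1).congr
          (fun x => by ring) (fun x => rfl)
      have := fd2_mul_pow hc hr1
      exact fd2_trans_pow hLle (this.congr_left fun x => by ring) (by norm_num)
    exact ((fd2_trans_pow hLle hrFY (by norm_num)).sub h2).add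
      (fd2_cont_mul_pow hLle (by fun_prop) 3)
  have htexp : (fun x => f (y x) / f x - c₂*(x-α)) =O[L] fun x => (x-α)^2 := by
    have hMe := fd2_div_pow hxne hM (by norm_num : 1 ≤ 3)
    have h := hMe.mul hef
    have h2 := h.congr_right (fun x : ℝ => by rw [mul_one] : ∀ x : ℝ,
      (x-α)^(3-1) * (1:ℝ) = (x-α)^(3-1))
    refine (h2.congr' ?_ (EventuallyEq.refl _ _)).congr_right fun x => by norm_num
    filter_upwards [hxne, hfne] with x hx hfx
    have hex : x - α ≠ 0 := sub_ne_zero.mpr hx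
    rw [pow_one]
    field_simp
  have httend : Tendsto (fun x => f (y x) / f x) L (𝓝 0) := by
    have h0 : Tendsto (fun x : ℝ => (x-α)^2) L (𝓝 0) := by
      have h : Continuous (fun x : ℝ => (x-α)^2) := by fun_prop
      have := (h.tendsto α).mono_left hLle
      simpa using this
    have h1 := htexp.trans_tendsto h0
    have h2 : Tendsto (fun x : ℝ => c₂*(x-α)) L (𝓝 0) := by
      have h : Continuous (fun x : ℝ => c₂*(x-α)) := by fun_prop
      have := (h.tendsto α).mono_left hLle
      simpa using this
    have := h1.add h2
    simpa using this
  have ht1 : (fun x => f (y x) / f x) =O[L] fun x => (x-α)^1 := by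
    have h2 : (fun x : ℝ => c₂*(x-α)) =O[L] fun x => (x-α)^1 :=
      (fd2_cont_mul_pow hLle (p := fun _ => c₂) continuous_const 1).congr
        (fun x => by ring) (fun x => rfl)
    have := (fd2_trans_pow hLle htexp (by norm_num : 1 ≤ 2)).add h2
    exact this.congr_left fun x => by ring
  have hrA : (fun x => A (f (y x) / f x) - (1 + a1 * (f (y x) / f x))) =O[L]
      fun x => (x-α)^2 := by
    have h := hrA0.comp_tendsto httend
    refine h.trans ?_
    exact (ht1.pow 2).congr_right (fun x => by rw [← pow_mul])
  -- expansion of w = f(y)/f'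
  set QW : ℝ → ℝ := fun x => c₂*(x-α)^2 + (2*c3 - 4*c₂^2)*(x-α)^3 with hQWdef
  have hQWO : QW =O[L] fun x => (x-α)^2 := by
    have h := fd2_cont_mul_pow hLle (p := fun x => c₂ + (2*c3 - 4*c₂^2)*(x-α))
      (by fun_prop) 2 (a := α)
    refine h.congr_left fun x => by rw [hQWdef]; ring
  have hNW : (fun x => f (y x) - deriv f x * QW x) =O[L] fun x => (x-α)^4 := by
    have hid : ∀ x, f (y x) - deriv f x * QW x
        = (f (y x) - (d*c₂*(x-α)^2 + d*(2*c3-2*c₂^2)*(x-α)^3))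
          - (deriv f x - (d + 2*d*c₂*(x-α) + 3*d*c3*(x-α)^2)) * QW x
          - (x-α)^4 * (d*(7*c₂*c3 - 8*c₂^3) + d*(6*c3^2 - 12*c₂^2*c3)*(x-α)) := by
      intro x; rw [hQWdef]; ring
    refine IsBigO.congr_left ?_ fun x => (hid x).symm
    have h2 : (fun x => (deriv f x - (d + 2*d*c₂*(x-α) + 3*d*c3*(x-α)^2)) * QW x)
        =O[L] fun x => (x-α)^4 := fd2_trans_pow hLle (fd2_mul_pow hr2 hQWO) (by norm_num)
    exact (hrFY.sub h2).sub (fd2_cont_mul_pow hLle (by fun_prop) 4)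
  have hsW : (fun x => f (y x) / deriv f x - QW x) =O[L] fun x => (x-α)^4 := by
    have heq : ∀ᶠ x in L, f (y x) / deriv f x - QW x
        = (f (y x) - deriv f x * QW x) / deriv f x := by
      filter_upwards [hf'ne] with x hx
      field_simp
    exact (fd2_div_isBigO hNW hinvf').congr' (EventuallyEq.symm heq) (EventuallyEq.refl _ _)
  have hw2 : (fun x => f (y x) / deriv f x) =O[L] fun x => (x-α)^2 := by
    have := hQWO.add (fd2_trans_pow hLle hsW (by norm_num : 2 ≤ 4))
    exact this.congr_left fun x => by ring
  -- product t * w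
  have htw : (fun x => (f (y x) / f x) * (f (y x) / deriv f x) - c₂^2*(x-α)^3)
      =O[L] fun x => (x-α)^4 := by
    have hid : ∀ x, (f (y x) / f x) * (f (y x) / deriv f x) - c₂^2*(x-α)^3
        = (f (y x) / f x - c₂*(x-α)) * (f (y x) / deriv f x)
          + c₂*(x-α)*(f (y x) / deriv f x - QW x)
          + (x-α)^4 * (c₂*(2*c3 - 4*c₂^2)) := by
      intro x; rw [hQWdef]; ring
    refine IsBigO.congr_left ?_ fun x => (hid x).symm
    have h1 : (fun x => (f (y x) / f x - c₂*(x-α)) * (f (y x) / deriv f x))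
        =O[L] fun x => (x-α)^4 := fd2_mul_pow htexp hw2
    have hc : (fun x : ℝ => c₂*(x-α)) =O[L] fun x => (x-α)^1 :=
      (fd2_cont_mul_pow hLle (p := fun _ => c₂) continuous_const 1).congr
        (fun x => by ring) (fun x => rfl)
    have h2 : (fun x => c₂*(x-α)*(f (y x) / deriv f x - QW x)) =O[L]
        fun x => (x-α)^4 := fd2_trans_pow hLle (fd2_mul_pow hc hsW) (by norm_num)
    exact (h1.add h2).add (fd2_cont_mul_pow hLle continuous_const 4)
  have hrAw : (fun x => (A (f (y x) / f x) - (1 + a1 * (f (y x) / f x)))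
      * (f (y x) / deriv f x)) =O[L] fun x => (x-α)^4 := fd2_mul_pow hrA hw2
  -- final assembly
  have hfinal : ∀ x, z x - α - (2 - a1) * c₂^2 * (x-α)^3
      = (y x - α - Q1 x) - (f (y x) / deriv f x - QW x)
        - a1 * ((f (y x) / f x) * (f (y x) / deriv f x) - c₂^2*(x-α)^3)
        - (A (f (y x) / f x) - (1 + a1 * (f (y x) / f x))) * (f (y x) / deriv f x) := by
    intro x
    rw [hz x, hQ1def, hQWdef]
    ring
  have hO : (fun x => z x - α - (2 - a1) * c₂^2 * (x-α)^3) =O[L]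
      fun x => (x-α)^4 :=
    IsBigO.congr_left (((hs1.sub hsW).sub (htw.const_mul_left a1)).sub hrAw)
      fun x => (hfinal x).symm
  exact hO

/-- Error equation for the first two steps of scheme (FD2):
`z x - α = (2 - A'(0))·c₂²·(x - α)³ + O((x - α)⁴)`; in particular the two-step
scheme has order at least three, and at least four when `A'(0) = 2`. -/
theorem fd2_two_step_error
    (f A : ℝ → ℝ) (α : ℝ)
    (U : Set ℝ) (hU : IsOpen U) (hαU : α ∈ U)
    (hf : ContDiffOn ℝ (⊤ : ℕ∞) f U)
    (hroot : f α = 0) (hf'α : deriv f α ≠ 0)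
    (hA : ContDiff ℝ (⊤ : ℕ∞) A) (hA0 : A 0 = 1)
    (c₂ : ℝ) (hc₂ : c₂ = iteratedDeriv 2 f α / (2 * deriv f α))
    (y z : ℝ → ℝ)
    (hy : ∀ x, y x = x - f x / deriv f x)
    (hz : ∀ x, z x = y x - A (f (y x) / f x) * (f (y x) / deriv f x)) :
    ((fun x => z x - α - (2 - deriv A 0) * c₂ ^ 2 * (x - α) ^ 3)
        =O[𝓝[{x : ℝ | x ≠ α ∧ f x ≠ 0}] α] (fun x => (x - α) ^ 4)) ∧
    (∃ δ > 0, ∃ C > 0, ∀ x : ℝ, 0 < |x - α| → |x - α| < δ → f x ≠ 0 →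
        |z x - α| ≤ C * |x - α| ^ 3) ∧
    (deriv A 0 = 2 → ∃ δ > 0, ∃ C > 0, ∀ x : ℝ, 0 < |x - α| → |x - α| < δ → f x ≠ 0 →
        |z x - α| ≤ C * |x - α| ^ 4) := by
  have h1 := fd2_main f A α U hU hαU hf hroot hf'α hA hA0 c₂ hc₂ y z hy hz
  obtain ⟨C, hC⟩ := h1.bound
  rw [eventually_nhdsWithin_iff] at hC
  obtain ⟨δ, hδ, hball⟩ := Metric.eventually_nhds_iff.mp hC
  set T := (2 - deriv A 0) * c₂ ^ 2 with hT
  have key : ∀ x : ℝ, 0 < |x - α| → |x - α| < min δ 1 → f x ≠ 0 →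
      |z x - α - T * (x - α)^3| ≤ |C| * |x - α|^4 ∧ |x - α| < 1 := by
    intro x hx0 hxδ hfx
    have hxne : x ≠ α := by
      intro h
      rw [h] at hx0
      simp at hx0
    have hdist : dist x α < δ := by
      rw [Real.dist_eq]
      exact lt_of_lt_of_le hxδ (min_le_left _ _)
    have hb := hball hdist ⟨hxne, hfx⟩
    rw [Real.norm_eq_abs, Real.norm_eq_abs, abs_pow] at hb
    refine ⟨hb.trans (mul_le_mul_of_nonneg_right (le_abs_self C) (by positivity)),
      lt_of_lt_of_le hxδ (min_le_right _ _)⟩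
  refine ⟨h1, ⟨min δ 1, lt_min hδ one_pos, |C| + |T| + 1, by positivity, ?_⟩, ?_⟩
  · intro x hx0 hxδ hfx
    obtain ⟨hb, he1⟩ := key x hx0 hxδ hfx
    have h3 : |x - α|^4 ≤ |x - α|^3 :=
      pow_le_pow_of_le_one (abs_nonneg _) he1.le (by norm_num)
    have h4 : |z x - α - T * (x - α)^3| ≤ |C| * |x - α|^3 :=
      hb.trans (mul_le_mul_of_nonneg_left h3 (abs_nonneg C))
    have h2 : |z x - α| ≤ |z x - α - T * (x - α)^3| + |T * (x - α)^3| := by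
      calc |z x - α| = |(z x - α - T * (x - α)^3) + T * (x - α)^3| := by ring_nf
        _ ≤ _ := abs_add_le _ _
    have h5 : |T * (x - α)^3| = |T| * |x - α|^3 := by rw [abs_mul, abs_pow]
    have h6 : 0 ≤ |x - α|^3 := by positivity
    nlinarith [h2, h4, h5, h6]
  · intro hA2
    refine ⟨min δ 1, lt_min hδ one_pos, |C| + 1, by positivity, ?_⟩
    intro x hx0 hxδ hfx
    obtain ⟨hb, _⟩ := key x hx0 hxδ hfx
    have hT0 : T = 0 := by rw [hT, hA2]; ring
    rw [hT0, zero_mul, sub_zero] at hb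
    have h6 : 0 ≤ |x - α|^4 := by positivity
    nlinarith [hb, h6]
end

section
/- Let f : ℝ → ℝ be C^∞ on an open set containing α, with f(α) = 0 and f'(α) ≠ 0, and let κ ≠ 0 be a real number. Set c₂ = f''(α)/(2 f'(α)). For x near α with f(x) ≠ 0 let w(x) = x − κ·f(x). Then the divided difference satisfies f[x, w(x)] = f'(α)·( 1 + c₂·(2 − κ·f'(α))·(x − α) ) + O((x − α)²) as x → α through points x ≠ α with f(x) ≠ 0; in particular f[x, w(x)] → f'(α) as x → α. -/
open Topology Filter Asymptotics

lemma pow_isBigO_pow_nhds (α : ℝ) {m n : ℕ} (h : m ≤ n) :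
    (fun x : ℝ => (x - α) ^ n) =O[𝓝 α] fun x => (x - α) ^ m := by
  rw [Asymptotics.isBigO_iff]
  refine ⟨1, ?_⟩
  have : ∀ᶠ x in 𝓝 α, |x - α| ≤ 1 := by
    have : Tendsto (fun x : ℝ => |x - α|) (𝓝 α) (𝓝 |α - α|) :=
      (continuous_abs.comp (continuous_id.sub continuous_const)).tendsto α
    simp only [sub_self, abs_zero] at this
    exact this.eventually_le_const (by norm_num)
  filter_upwards [this] with x hx
  simp only [norm_pow, Real.norm_eq_abs, one_mul]
  exact pow_le_pow_of_le_one (abs_nonneg _) hx h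

lemma stepup {h h' : ℝ → ℝ} {α : ℝ} {n : ℕ}
    (hd : ∀ᶠ y in 𝓝 α, HasDerivAt h (h' y) y) (h0 : h α = 0)
    (hO : h' =O[𝓝 α] fun x => (x - α) ^ n) :
    h =O[𝓝 α] fun x => (x - α) ^ (n + 1) := by
  obtain ⟨C, hC0, hC⟩ := hO.exists_nonneg
  rw [IsBigOWith] at hC
  obtain ⟨r, hr, hball⟩ := Metric.eventually_nhds_iff_ball.1 (hd.and hC)
  rw [Asymptotics.isBigO_iff]
  refine ⟨C, Metric.eventually_nhds_iff_ball.2 ⟨r, hr, fun x hx => ?_⟩⟩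
  have hseg : segment ℝ α x ⊆ Metric.ball α r :=
    (convex_ball α r).segment_subset (Metric.mem_ball_self hr) hx
  have habs : ∀ y ∈ segment ℝ α x, |y - α| ≤ |x - α| := by
    intro y hy
    have : segment ℝ α x ⊆ Metric.closedBall α (dist x α) :=
      (convex_closedBall α (dist x α)).segment_subset
        (Metric.mem_closedBall_self dist_nonneg) (Metric.mem_closedBall.2 le_rfl)
    have := this hy
    rw [Metric.mem_closedBall, Real.dist_eq, Real.dist_eq] at this
    exact this
  have key := Convex.norm_image_sub_le_of_norm_hasDerivWithin_le
    (f := h) (f' := h') (s := segment ℝ α x) (C := C * |x - α| ^ n)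
    (fun y hy => ((hball y (hseg hy)).1).hasDerivWithinAt)
    (fun y hy => by
      have h1 := (hball y (hseg hy)).2
      simp only [norm_pow, Real.norm_eq_abs] at h1 ⊢
      exact h1.trans (mul_le_mul_of_nonneg_left
        (pow_le_pow_left₀ (abs_nonneg _) (habs y hy) n) hC0))
    (convex_segment α x) (left_mem_segment ℝ α x) (right_mem_segment ℝ α x)
  rw [h0, sub_zero] at key
  simp only [norm_pow, Real.norm_eq_abs]
  calc ‖h x‖ ≤ C * |x - α| ^ n * ‖x - α‖ := key
    _ = C * |x - α| ^ (n + 1) := by rw [Real.norm_eq_abs]; ring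

/-- purely algebraic identity behind the expansion -/
lemma steffensen_algebra (a b c₂ κ T X s u v : ℝ)
    (h1 : X = a * T + b * T ^ 2 + u) (h2 : s = T - κ * X) (hb : b = c₂ * a) :
    X - (a * s + b * s ^ 2 + v) - a * (1 + c₂ * (2 - κ * a) * T) * (κ * X)
      = u - v + (2 * (1 - κ * a) * b * κ - κ * a * (c₂ * (2 - κ * a))) * (T * u)
        - 2 * b ^ 2 * κ ^ 2 * (T ^ 2 * u) - b * κ ^ 2 * u ^ 2
        + (2 * (1 - κ * a) * b ^ 2 * κ - κ * a * b * (c₂ * (2 - κ * a))) * T ^ 3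
        - b ^ 3 * κ ^ 2 * T ^ 4 := by
  subst h1 h2 hb; ring

/-- Expansion of the divided difference `f[x, w x]` with `w x = x - κ f x`:
`f[x, w x] = f'(α)·(1 + c₂(2 - κ f'(α))(x - α)) + O((x - α)²)`;
in particular `f[x, w x] → f'(α)` as `x → α`. -/
theorem steffensen_divided_difference
    (f : ℝ → ℝ) (α κ : ℝ) (hκ : κ ≠ 0)
    (U : Set ℝ) (hU : IsOpen U) (hαU : α ∈ U)
    (hf : ContDiffOn ℝ (⊤ : ℕ∞) f U)
    (hroot : f α = 0) (hf'α : deriv f α ≠ 0)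
    (c₂ : ℝ) (hc₂ : c₂ = iteratedDeriv 2 f α / (2 * deriv f α))
    (w : ℝ → ℝ) (hw : ∀ x, w x = x - κ * f x) :
    ((fun x => (f x - f (w x)) / (x - w x) -
          deriv f α * (1 + c₂ * (2 - κ * deriv f α) * (x - α)))
        =O[𝓝[{x : ℝ | x ≠ α ∧ f x ≠ 0}] α] (fun x => (x - α) ^ 2)) ∧
    Tendsto (fun x => (f x - f (w x)) / (x - w x))
      (𝓝[{x : ℝ | x ≠ α ∧ f x ≠ 0}] α) (𝓝 (deriv f α)) := by
  set a := deriv f α with ha_def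
  set b := iteratedDeriv 2 f α / 2 with hb_def
  have hb : b = c₂ * a := by
    rw [hc₂, hb_def]; field_simp
  set e : ℝ → ℝ := fun y => f y - a * (y - α) - b * (y - α) ^ 2 with he_def
  have hUnhds : U ∈ 𝓝 α := hU.mem_nhds hαU
  have hdf : ContDiffOn ℝ (⊤ : ℕ∞) (deriv f) U := hf.deriv_of_isOpen hU (by simp)
  have hddf : ContDiffOn ℝ (⊤ : ℕ∞) (deriv (deriv f)) U := hdf.deriv_of_isOpen hU (by simp)
  -- derivative facts
  have hfd : ∀ y ∈ U, HasDerivAt f (deriv f y) y := fun y hy =>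
    ((hf.contDiffAt (hU.mem_nhds hy)).differentiableAt (by simp)).hasDerivAt
  have hdfd : ∀ y ∈ U, HasDerivAt (deriv f) (deriv (deriv f) y) y := fun y hy =>
    ((hdf.contDiffAt (hU.mem_nhds hy)).differentiableAt (by simp)).hasDerivAt
  set e1 : ℝ → ℝ := fun y => deriv f y - a - 2 * b * (y - α) with he1_def
  set e2 : ℝ → ℝ := fun y => deriv (deriv f) y - 2 * b with he2_def
  -- e2 = O(t)
  have he2α : e2 α = 0 := by
    have : iteratedDeriv 2 f α = deriv (deriv f) α := by
      rw [iteratedDeriv_succ, iteratedDeriv_one]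
    simp only [he2_def, hb_def, this]; ring
  have he2O : e2 =O[𝓝 α] fun x => (x - α) ^ 1 := by
    have hdiff : DifferentiableAt ℝ e2 α := by
      have : DifferentiableAt ℝ (deriv (deriv f)) α :=
        (hddf.contDiffAt hUnhds).differentiableAt (by simp)
      exact this.sub_const _
    have := hdiff.isBigO_sub
    rw [he2α, ] at this
    simpa only [sub_zero, pow_one] using this
  have he1d : ∀ᶠ y in 𝓝 α, HasDerivAt e1 (e2 y) y := by
    filter_upwards [hUnhds] with y hy
    have h1 : HasDerivAt (fun y => deriv f y - a - 2 * b * (y - α))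
        (deriv (deriv f) y - 2 * b * 1) y :=
      ((hdfd y hy).sub_const a).sub
        ((((hasDerivAt_id y).sub_const α)).const_mul (2 * b))
    have h2 : HasDerivAt e1 (deriv (deriv f) y - 2 * b * 1) y := h1
    convert h2 using 1
    simp only [he2_def]; ring
  have hed : ∀ᶠ y in 𝓝 α, HasDerivAt e (e1 y) y := by
    filter_upwards [hUnhds] with y hy
    have h1 : HasDerivAt (fun y => f y - a * (y - α) - b * (y - α) ^ 2)
        (deriv f y - a * 1 - b * (2 * (y - α) ^ 1 * 1)) y :=
      ((hfd y hy).sub (((hasDerivAt_id y).sub_const α).const_mul a)).sub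
        ((((hasDerivAt_id y).sub_const α).pow 2).const_mul b)
    have : HasDerivAt e (deriv f y - a * 1 - b * (2 * (y - α) ^ 1 * 1)) y := h1
    convert this using 1
    simp only [he1_def]; ring
  have he1O : e1 =O[𝓝 α] fun x => (x - α) ^ 2 :=
    stepup he1d (by simp [he1_def, ha_def]) he2O
  have heO : e =O[𝓝 α] fun x => (x - α) ^ 3 :=
    stepup hed (by simp [he_def, hroot]) he1O
  -- basic facts
  have hfc : ContinuousAt f α :=
    ((hf.contDiffAt hUnhds).differentiableAt (by simp)).continuousAt
  have hwt : Tendsto w (𝓝 α) (𝓝 α) := by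
    have : Tendsto (fun x => x - κ * f x) (𝓝 α) (𝓝 (α - κ * f α)) :=
      (continuous_id.tendsto α).sub ((hfc.tendsto).const_mul κ)
    rw [hroot, mul_zero, sub_zero] at this
    exact this.congr fun x => (hw x).symm
  have hfO : f =O[𝓝 α] fun x => (x - α) ^ 1 := by
    have := ((hf.contDiffAt hUnhds).differentiableAt (by simp)).isBigO_sub
    rw [hroot] at this
    simpa only [sub_zero, pow_one] using this
  have hsO : (fun x => w x - α) =O[𝓝 α] fun x => (x - α) ^ 1 := by
    have h1 : (fun x : ℝ => x - α) =O[𝓝 α] fun x => (x - α) ^ 1 := by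
      simp only [pow_one]; exact isBigO_refl _ _
    have := h1.sub ((hfO.const_mul_left κ))
    exact this.congr_left fun x => by rw [hw]; ring
  have hewO : (fun x => e (w x)) =O[𝓝 α] fun x => (x - α) ^ 3 := by
    have h1 : (fun x => e (w x)) =O[𝓝 α] fun x => (w x - α) ^ 3 :=
      heO.comp_tendsto hwt
    exact h1.trans (by simpa only [← pow_mul] using hsO.pow 3)
  -- bounded factors
  have htO1 : (fun x : ℝ => x - α) =O[𝓝 α] (fun _ => (1:ℝ)) := by
    rw [isBigO_one_iff]
    have ht : Tendsto (fun x : ℝ => x - α) (𝓝 α) (𝓝 (α - α)) :=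
      (continuous_id.sub continuous_const).tendsto α
    rw [sub_self] at ht
    exact ht.norm.isBoundedUnder_le
  have heO1 : e =O[𝓝 α] (fun _ => (1:ℝ)) := by
    refine heO.trans ?_
    have := (htO1.pow 3)
    exact this.congr (fun x => rfl) (fun x => one_pow 3)
  set N : ℝ → ℝ := fun x =>
    f x - f (w x) - a * (1 + c₂ * (2 - κ * a) * (x - α)) * (κ * f x) with hN_def
  have hNkey : ∀ x, N x
      = e x - e (w x) + (2 * (1 - κ * a) * b * κ - κ * a * (c₂ * (2 - κ * a))) *
          ((x - α) * e x)
        - 2 * b ^ 2 * κ ^ 2 * ((x - α) ^ 2 * e x) - b * κ ^ 2 * (e x) ^ 2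
        + (2 * (1 - κ * a) * b ^ 2 * κ - κ * a * b * (c₂ * (2 - κ * a))) * (x - α) ^ 3
        - b ^ 3 * κ ^ 2 * (x - α) ^ 4 := by
    intro x
    have h1 : f x = a * (x - α) + b * (x - α) ^ 2 + e x := by
      simp only [he_def]; ring
    have h2 : w x - α = (x - α) - κ * f x := by rw [hw]; ring
    have h3 := steffensen_algebra a b c₂ κ (x - α) (f x) (w x - α) (e x) (e (w x)) h1 h2 hb
    have h4 : f (w x) = a * (w x - α) + b * (w x - α) ^ 2 + e (w x) := by
      simp only [he_def]; ring
    show f x - f (w x) - a * (1 + c₂ * (2 - κ * a) * (x - α)) * (κ * f x) = _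
    rw [h4]; exact h3
  have P3 : (fun x => (x - α) * e x) =O[𝓝 α] fun x => (x - α) ^ 3 :=
    (htO1.mul heO).congr (fun x => rfl) (fun x => one_mul _)
  have P4 : (fun x => (x - α) ^ 2 * e x) =O[𝓝 α] fun x => (x - α) ^ 3 := by
    have ht2 : (fun x : ℝ => (x - α) ^ 2) =O[𝓝 α] (fun _ => (1:ℝ)) :=
      (htO1.pow 2).congr (fun x => rfl) (fun x => one_pow 2)
    exact (ht2.mul heO).congr (fun x => rfl) (fun x => one_mul _)
  have P5 : (fun x => (e x) ^ 2) =O[𝓝 α] fun x => (x - α) ^ 3 := by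
    have := heO1.mul heO
    exact (this.congr (fun x => by ring) (fun x => one_mul _))
  have P6 : (fun x : ℝ => (x - α) ^ 3) =O[𝓝 α] fun x : ℝ => (x - α) ^ 3 :=
    isBigO_refl _ _
  have P7 : (fun x : ℝ => (x - α) ^ 4) =O[𝓝 α] fun x : ℝ => (x - α) ^ 3 :=
    pow_isBigO_pow_nhds α (by norm_num)
  have hNO : N =O[𝓝 α] fun x => (x - α) ^ 3 := by
    have hsum := ((((heO.sub hewO).add
        (P3.const_mul_left (2 * (1 - κ * a) * b * κ - κ * a * (c₂ * (2 - κ * a))))).sub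
        (P4.const_mul_left (2 * b ^ 2 * κ ^ 2))).sub
        (P5.const_mul_left (b * κ ^ 2))).add
        (P6.const_mul_left (2 * (1 - κ * a) * b ^ 2 * κ - κ * a * b * (c₂ * (2 - κ * a)))) |>.sub
        (P7.const_mul_left (b ^ 3 * κ ^ 2))
    exact hsum.congr_left fun x => (hNkey x).symm
  -- lower bound on |f x|
  have hfasub : (fun x => f x - a * (x - α)) =O[𝓝 α] fun x => (x - α) ^ 2 := by
    have hEq : (fun x => f x - a * (x - α)) = fun x => e x + b * (x - α) ^ 2 := by
      funext x; simp only [he_def]; ring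
    rw [hEq]
    exact (heO.trans (pow_isBigO_pow_nhds α (by norm_num))).add
      ((isBigO_refl (fun x : ℝ => (x - α) ^ 2) (𝓝 α)).const_mul_left b)
  have hlito : (fun x => f x - a * (x - α)) =o[𝓝 α] fun x => x - α := by
    refine hfasub.trans_isLittleO ?_
    have h1 : (fun x : ℝ => x - α) =o[𝓝 α] (fun _ => (1:ℝ)) := by
      rw [isLittleO_one_iff]
      have ht : Tendsto (fun x : ℝ => x - α) (𝓝 α) (𝓝 (α - α)) :=
        (continuous_id.sub continuous_const).tendsto α
      rwa [sub_self] at ht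
    have h2 := h1.mul_isBigO (isBigO_refl (fun x : ℝ => x - α) (𝓝 α))
    exact h2.congr (fun x => by ring) (fun x => one_mul _)
  have hlow : ∀ᶠ x in 𝓝 α, |a| / 2 * |x - α| ≤ |f x| := by
    have heps := hlito.def (by positivity : (0:ℝ) < |a| / 2)
    filter_upwards [heps] with x hx
    rw [Real.norm_eq_abs, Real.norm_eq_abs] at hx
    have h1 : |a * (x - α)| - |a * (x - α) - f x| ≤ |a * (x - α) - (a * (x - α) - f x)| :=
      abs_sub_abs_le_abs_sub _ _
    have h2 : a * (x - α) - (a * (x - α) - f x) = f x := by ring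
    rw [h2] at h1
    have h3 : |a * (x - α) - f x| = |f x - a * (x - α)| := abs_sub_comm _ _
    rw [h3, abs_mul] at h1
    nlinarith [abs_nonneg (x - α), abs_nonneg a]
  -- main big-O statement
  obtain ⟨C, hC0, hCb⟩ := hNO.exists_nonneg
  rw [IsBigOWith] at hCb
  have hmem : ∀ᶠ x in 𝓝[{x : ℝ | x ≠ α ∧ f x ≠ 0}] α, x ≠ α ∧ f x ≠ 0 :=
    eventually_mem_nhdsWithin
  have main : (fun x => (f x - f (w x)) / (x - w x) -
          a * (1 + c₂ * (2 - κ * a) * (x - α)))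
        =O[𝓝[{x : ℝ | x ≠ α ∧ f x ≠ 0}] α] (fun x => (x - α) ^ 2) := by
    rw [isBigO_iff]
    refine ⟨2 * C / (|κ| * |a|), ?_⟩
    filter_upwards [hmem, hCb.filter_mono nhdsWithin_le_nhds,
      hlow.filter_mono nhdsWithin_le_nhds] with x hxS hN hl
    obtain ⟨hxa, hfx⟩ := hxS
    have hxw : x - w x = κ * f x := by rw [hw]; ring
    have hkf : κ * f x ≠ 0 := mul_ne_zero hκ hfx
    have hEq : (f x - f (w x)) / (x - w x) - a * (1 + c₂ * (2 - κ * a) * (x - α))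
        = N x / (κ * f x) := by
      rw [hxw, hN_def]; field_simp
    rw [hEq]
    have htpos : 0 < |x - α| := abs_pos.2 (sub_ne_zero.2 hxa)
    have hapos : 0 < |a| := abs_pos.2 hf'α
    have hkpos : 0 < |κ| := abs_pos.2 hκ
    have hden_ge : |κ| * (|a| / 2 * |x - α|) ≤ |κ * f x| := by
      rw [abs_mul]
      exact mul_le_mul_of_nonneg_left hl (abs_nonneg κ)
    have hnum : |N x| ≤ C * |x - α| ^ 3 := by
      have := hN
      rw [Real.norm_eq_abs, Real.norm_eq_abs, abs_pow] at this
      exact this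
    have hdpos2 : 0 < |κ| * (|a| / 2 * |x - α|) := by positivity
    rw [Real.norm_eq_abs, Real.norm_eq_abs, abs_div, abs_pow]
    have harith : ∀ t k aa : ℝ, t ≠ 0 → k ≠ 0 → aa ≠ 0 →
        (C * t ^ 3) / (k * (aa / 2 * t)) = 2 * C / (k * aa) * t ^ 2 := by
      intro t k aa h1 h2 h3; field_simp
    calc |N x| / |κ * f x| ≤ (C * |x - α| ^ 3) / (|κ| * (|a| / 2 * |x - α|)) :=
          div_le_div₀ (by positivity) hnum hdpos2 hden_ge
      _ = 2 * C / (|κ| * |a|) * |x - α| ^ 2 :=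
          harith _ _ _ (ne_of_gt htpos) (ne_of_gt hkpos) (ne_of_gt hapos)
  refine ⟨main, ?_⟩
  -- tendsto statement
  have hT : Tendsto (fun x => a * (1 + c₂ * (2 - κ * a) * (x - α)))
      (𝓝[{x : ℝ | x ≠ α ∧ f x ≠ 0}] α) (𝓝 a) := by
    have hc : Continuous fun x : ℝ => a * (1 + c₂ * (2 - κ * a) * (x - α)) :=
      continuous_const.mul (continuous_const.add
        (continuous_const.mul (continuous_id.sub continuous_const)))
    have := (hc.tendsto α).mono_left
      (nhdsWithin_le_nhds (s := {x : ℝ | x ≠ α ∧ f x ≠ 0}))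
    simpa using this
  have ht2z : Tendsto (fun x : ℝ => (x - α) ^ 2)
      (𝓝[{x : ℝ | x ≠ α ∧ f x ≠ 0}] α) (𝓝 0) := by
    have hc : Continuous fun x : ℝ => (x - α) ^ 2 :=
      (continuous_id.sub continuous_const).pow 2
    have := (hc.tendsto α).mono_left
      (nhdsWithin_le_nhds (s := {x : ℝ | x ≠ α ∧ f x ≠ 0}))
    simpa using this
  have hz := main.trans_tendsto ht2z
  have := hz.add hT
  rw [zero_add] at this
  exact this.congr fun x => by ring
end

section
/- Let f : ℝ → ℝ be C^∞ on an open set containing α, with f(α) = 0 and f'(α) ≠ 0. Let G : ℝ → ℝ be C^∞ with G(0) = 1 and G'(0) = 2, and set M₀ = G''(0)/2, c₂ = f''(α)/(2 f'(α)), c₃ = f'''(α)/(6 f'(α)). For x near α define y(x) = x − f(x)/f'(x) and z(x) = y(x) − G(f(y(x))/f(x))·f(y(x))/f'(x). Then z(x) − α = −c₂·((M₀ − 5)c₂² + c₃)·(x − α)⁴ + O((x − α)⁵) as x → α through points x ≠ α with f(x) ≠ 0; in particular this two-step scheme has local convergence order at least four. -/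
open Topology Filter Asymptotics Set


private lemma bigO_of_deriv_bigO {R : ℝ → ℝ} {a : ℝ} {V : Set ℝ} (hV : IsOpen V) (haV : a ∈ V)
    (hdiff : ∀ x ∈ V, DifferentiableAt ℝ R x) (hR0 : R a = 0) {n : ℕ}
    (hd : deriv R =O[𝓝 a] fun x => (x - a) ^ n) :
    R =O[𝓝 a] fun x => (x - a) ^ (n + 1) := by
  rcases hd.exists_nonneg with ⟨C, hC0, hC⟩
  rw [isBigOWith_iff] at hC
  have h2 : {x | ‖deriv R x‖ ≤ C * ‖(x - a) ^ n‖} ∩ V ∈ 𝓝 a :=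
    inter_mem hC (hV.mem_nhds haV)
  rcases Metric.mem_nhds_iff.1 h2 with ⟨δ, hδ0, hball⟩
  rw [isBigO_iff]
  refine ⟨C, ?_⟩
  filter_upwards [Metric.ball_mem_nhds a hδ0] with x hx
  have hsub : Set.uIcc a x ⊆ Metric.ball a δ := by
    rw [← segment_eq_uIcc]
    exact (convex_ball a δ).segment_subset (Metric.mem_ball_self hδ0) hx
  have key : ‖R x - R a‖ ≤ (C * |x - a| ^ n) * ‖x - a‖ := by
    refine Convex.norm_image_sub_le_of_norm_deriv_le (fun t ht => hdiff t (hball (hsub ht)).2)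
      (fun t ht => ?_) (convex_uIcc a x) Set.left_mem_uIcc Set.right_mem_uIcc
    have h1 := (hball (hsub ht)).1
    have h3 : ‖(t - a) ^ n‖ ≤ |x - a| ^ n := by
      rw [norm_pow, Real.norm_eq_abs]
      exact pow_le_pow_left₀ (abs_nonneg _) (abs_sub_left_of_mem_uIcc ht) n
    calc ‖deriv R t‖ ≤ C * ‖(t - a) ^ n‖ := h1
      _ ≤ C * |x - a| ^ n := mul_le_mul_of_nonneg_left h3 hC0
  rw [hR0, sub_zero] at key
  calc ‖R x‖ ≤ (C * |x - a| ^ n) * ‖x - a‖ := key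
    _ = C * ‖(x - a) ^ (n + 1)‖ := by
        rw [norm_pow, Real.norm_eq_abs, pow_succ]; ring

private lemma taylor_bigO_aux (m : ℕ) :
    ∀ (f : ℝ → ℝ) (U : Set ℝ), IsOpen U → ∀ a ∈ U, ContDiffOn ℝ (⊤ : ℕ∞) f U →
    (fun x => f x - ∑ k ∈ Finset.range (m + 1),
        iteratedDeriv k f a / (Nat.factorial k : ℝ) * (x - a) ^ k) =O[𝓝 a]
      fun x => (x - a) ^ (m + 1) := by
  induction m with
  | zero =>
    intro f U hU a haU hf
    have hsum : ∀ x : ℝ, (∑ k ∈ Finset.range 1,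
        iteratedDeriv k f a / (Nat.factorial k : ℝ) * (x - a) ^ k) = f a := by
      intro x; simp [iteratedDeriv_zero]
    have hdiff : ∀ x ∈ U, DifferentiableAt ℝ (fun x => f x - f a) x := by
      intro x hx
      exact ((hf.differentiableOn (by simp)).differentiableAt (hU.mem_nhds hx)).sub_const _
    have := bigO_of_deriv_bigO hU haU hdiff (by simp) (n := 0) ?_
    · refine this.congr' (by filter_upwards with x; rw [hsum x]) (by rfl)
    · have hcont : ContinuousAt (deriv f) a :=
        (hf.continuousOn_deriv_of_isOpen hU (by simp)).continuousAt (hU.mem_nhds haU)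
      have : (deriv f) =O[𝓝 a] (fun _ => (1:ℝ)) := hcont.tendsto.isBigO_one ℝ
      refine (this.congr' ?_ ?_)
      · filter_upwards with x; rw [deriv_sub_const]
      · filter_upwards with x; simp
  | succ m ih =>
    intro f U hU a haU hf
    set c : ℕ → ℝ := fun k => iteratedDeriv k f a / (Nat.factorial k : ℝ) with hc
    have hR0 : (fun x => f x - ∑ k ∈ Finset.range (m + 2), c k * (x - a) ^ k) a = 0 := by
      simp only
      rw [Finset.sum_eq_single 0]
      · simp [hc, iteratedDeriv_zero]
      · intro k _ hk
        rw [sub_self, zero_pow hk, mul_zero]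
      · intro h; exact absurd (Finset.mem_range.2 (Nat.succ_pos _)) h
    have hdiff : ∀ x ∈ U, DifferentiableAt ℝ
        (fun x => f x - ∑ k ∈ Finset.range (m + 2), c k * (x - a) ^ k) x := by
      intro x hx
      refine ((hf.differentiableOn (by simp)).differentiableAt (hU.mem_nhds hx)).sub ?_
      exact (DifferentiableAt.fun_sum fun k _ =>
        (((differentiableAt_id.sub_const a).pow k).const_mul _))
    refine bigO_of_deriv_bigO hU haU hdiff hR0 (n := m + 1) ?_
    have hderiv_eq : ∀ᶠ x in 𝓝 a, deriv
        (fun x => f x - ∑ k ∈ Finset.range (m + 2), c k * (x - a) ^ k) x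
        = deriv f x - ∑ k ∈ Finset.range (m + 1),
            iteratedDeriv k (deriv f) a / (Nat.factorial k : ℝ) * (x - a) ^ k := by
      filter_upwards [hU.mem_nhds haU] with x hx
      have hfd : HasDerivAt f (deriv f x) x :=
        ((hf.differentiableOn (by simp)).differentiableAt (hU.mem_nhds hx)).hasDerivAt
      have hpd : HasDerivAt (fun x => ∑ k ∈ Finset.range (m + 2), c k * (x - a) ^ k)
          (∑ k ∈ Finset.range (m + 2), c k * ((k : ℝ) * (x - a) ^ (k - 1))) x := by
        refine HasDerivAt.fun_sum fun k _ => ?_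
        have : HasDerivAt (fun x : ℝ => (x - a) ^ k) ((k : ℝ) * (x - a) ^ (k - 1)) x := by
          simpa using ((hasDerivAt_id x).sub_const a).fun_pow k
        exact this.const_mul _
      rw [(hfd.fun_sub hpd).deriv]
      congr 1
      rw [Finset.sum_range_succ']
      simp only [Nat.cast_zero, zero_mul, mul_zero, add_zero]
      refine Finset.sum_congr rfl fun j _ => ?_
      rw [hc]
      simp only
      rw [iteratedDeriv_succ', Nat.factorial_succ, Nat.add_sub_cancel]
      push_cast
      have h1 : ((j : ℝ) + 1) ≠ 0 := by positivity
      have h2 : (Nat.factorial j : ℝ) ≠ 0 := Nat.cast_ne_zero.2 (Nat.factorial_ne_zero j)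
      field_simp
    have hdf : ContDiffOn ℝ (⊤ : ℕ∞) (deriv f) U := hf.deriv_of_isOpen hU (by simp)
    exact (ih (deriv f) U hU a haU hdf).congr' (hderiv_eq.mono fun x hx => hx.symm) (by rfl)

private lemma taylor_bigO {f : ℝ → ℝ} {U : Set ℝ} (hU : IsOpen U) {a : ℝ} (ha : a ∈ U)
    (hf : ContDiffOn ℝ (⊤ : ℕ∞) f U) (m : ℕ) :
    (fun x => f x - ∑ k ∈ Finset.range (m + 1),
        iteratedDeriv k f a / (Nat.factorial k : ℝ) * (x - a) ^ k) =O[𝓝 a]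
      fun x => (x - a) ^ (m + 1) :=
  taylor_bigO_aux m f U hU a ha hf


set_option maxHeartbeats 1000000 in
/-- Error equation for the first two steps of scheme (FD1):
`z x - α = -c₂·((M₀ - 5)c₂² + c₃)·(x - α)⁴ + O((x - α)⁵)`;
in particular the two-step scheme has local convergence order at least four. -/
theorem fd1_two_step_error
    (f G : ℝ → ℝ) (α : ℝ)
    (U : Set ℝ) (hU : IsOpen U) (hαU : α ∈ U)
    (hf : ContDiffOn ℝ (⊤ : ℕ∞) f U)
    (hroot : f α = 0) (hf'α : deriv f α ≠ 0)
    (hG : ContDiff ℝ (⊤ : ℕ∞) G) (hG0 : G 0 = 1) (hG1 : deriv G 0 = 2)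
    (M₀ c₂ c₃ : ℝ)
    (hM₀ : M₀ = iteratedDeriv 2 G 0 / 2)
    (hc₂ : c₂ = iteratedDeriv 2 f α / (2 * deriv f α))
    (hc₃ : c₃ = iteratedDeriv 3 f α / (6 * deriv f α))
    (y z : ℝ → ℝ)
    (hy : ∀ x, y x = x - f x / deriv f x)
    (hz : ∀ x, z x = y x - G (f (y x) / f x) * (f (y x) / deriv f x)) :
    ((fun x => z x - α + c₂ * ((M₀ - 5) * c₂ ^ 2 + c₃) * (x - α) ^ 4)
        =O[𝓝[{x : ℝ | x ≠ α ∧ f x ≠ 0}] α] (fun x => (x - α) ^ 5)) ∧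
    (∃ δ > 0, ∃ C > 0, ∀ x : ℝ, 0 < |x - α| → |x - α| < δ → f x ≠ 0 →
        |z x - α| ≤ C * |x - α| ^ 4) := by
  set l := 𝓝[{x : ℝ | x ≠ α ∧ f x ≠ 0}] α with hldef
  set A := deriv f α with hA
  set c4 : ℝ := iteratedDeriv 4 f α / (24 * A) with hc4
  have hls : l ≤ 𝓝 α := nhdsWithin_le_nhds
  have hmem : ∀ᶠ x in l, x ≠ α ∧ f x ≠ 0 := self_mem_nhdsWithin
  -- iterated derivative values
  have hA2 : (2 * A) ≠ 0 := by simp [hf'α]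
  have hiD2 : iteratedDeriv 2 f α = 2 * A * c₂ := by
    rw [hc₂]; field_simp; try ring
  have hiD3 : iteratedDeriv 3 f α = 6 * A * c₃ := by
    rw [hc₃]; field_simp; try ring
  have hiD4 : iteratedDeriv 4 f α = 24 * A * c4 := by
    rw [hc4]; field_simp
  have hGiD2 : iteratedDeriv 2 G 0 = 2 * M₀ := by rw [hM₀]; ring
  -- basic smoothness facts
  have hdiffU : ∀ x ∈ U, DifferentiableAt ℝ f x := fun x hx =>
    (hf.differentiableOn (by simp)).differentiableAt (hU.mem_nhds hx)
  have hdfC : ContDiffOn ℝ (⊤ : ℕ∞) (deriv f) U := hf.deriv_of_isOpen hU (by simp)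
  have hcd : ContinuousAt (deriv f) α :=
    (hdfC.continuousOn).continuousAt (hU.mem_nhds hαU)
  have hdf_ne : ∀ᶠ x in 𝓝 α, deriv f x ≠ 0 := hcd.eventually_ne hf'α
  -- Taylor expansions
  have h1 : (fun x => f x - (A*(x-α) + A*c₂*(x-α)^2 + A*c₃*(x-α)^3 + A*c4*(x-α)^4))
      =O[𝓝 α] (fun x => (x-α)^5) := by
    refine (taylor_bigO hU hαU hf 4).congr' ?_ EventuallyEq.rfl
    filter_upwards with x
    simp only [Finset.sum_range_succ, Finset.sum_range_zero, iteratedDeriv_zero,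
      iteratedDeriv_one, hroot, hiD2, hiD3, hiD4]
    have e2 : ((Nat.factorial 2 : ℕ) : ℝ) = 2 := by norm_num [Nat.factorial]
    have e3 : ((Nat.factorial 3 : ℕ) : ℝ) = 6 := by norm_num [Nat.factorial]
    have e4 : ((Nat.factorial 4 : ℕ) : ℝ) = 24 := by norm_num [Nat.factorial]
    simp only [e2, e3, e4]
    push_cast
    field_simp
    try ring
  have h1b : (fun w => f w - (A*(w-α) + A*c₂*(w-α)^2)) =O[𝓝 α] (fun w => (w-α)^3) := by
    refine (taylor_bigO hU hαU hf 2).congr' ?_ EventuallyEq.rfl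
    filter_upwards with x
    simp only [Finset.sum_range_succ, Finset.sum_range_zero, iteratedDeriv_zero,
      iteratedDeriv_one, hroot, hiD2]
    have e2 : ((Nat.factorial 2 : ℕ) : ℝ) = 2 := by norm_num [Nat.factorial]
    have e3 : ((Nat.factorial 3 : ℕ) : ℝ) = 6 := by norm_num [Nat.factorial]
    have e4 : ((Nat.factorial 4 : ℕ) : ℝ) = 24 := by norm_num [Nat.factorial]
    simp only [e2, e3, e4]
    push_cast
    field_simp
    try ring
  have hg1 : iteratedDeriv 1 (deriv f) α = 2 * A * c₂ := by
    rw [← iteratedDeriv_succ']; norm_num [hiD2]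
  have hg2 : iteratedDeriv 2 (deriv f) α = 6 * A * c₃ := by
    rw [← iteratedDeriv_succ']; norm_num [hiD3]
  have hg3 : iteratedDeriv 3 (deriv f) α = 24 * A * c4 := by
    rw [← iteratedDeriv_succ']; norm_num [hiD4]
  have h2 : (fun x => deriv f x - (A + 2*A*c₂*(x-α) + 3*A*c₃*(x-α)^2 + 4*A*c4*(x-α)^3))
      =O[𝓝 α] (fun x => (x-α)^4) := by
    refine (taylor_bigO hU hαU hdfC 3).congr' ?_ EventuallyEq.rfl
    filter_upwards with x
    simp only [Finset.sum_range_succ, Finset.sum_range_zero, iteratedDeriv_zero,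
      hg1, hg2, hg3]
    have e2 : ((Nat.factorial 2 : ℕ) : ℝ) = 2 := by norm_num [Nat.factorial]
    have e3 : ((Nat.factorial 3 : ℕ) : ℝ) = 6 := by norm_num [Nat.factorial]
    have e4 : ((Nat.factorial 4 : ℕ) : ℝ) = 24 := by norm_num [Nat.factorial]
    simp only [e2, e3, e4]
    push_cast
    field_simp
    try ring
  have hG3 : (fun t => G t - (1 + 2*t + M₀*t^2)) =O[𝓝 (0:ℝ)] (fun t => t^3) := by
    refine ((taylor_bigO isOpen_univ (Set.mem_univ (0:ℝ)) hG.contDiffOn 2).congr' ?_ ?_)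
    · filter_upwards with t
      simp only [Finset.sum_range_succ, Finset.sum_range_zero, iteratedDeriv_zero,
        iteratedDeriv_one, hG0, hG1, hGiD2, sub_zero]
      have e2 : ((Nat.factorial 2 : ℕ) : ℝ) = 2 := by norm_num [Nat.factorial]
      simp only [e2]
      push_cast
      field_simp
      try ring
    · filter_upwards with t; rw [sub_zero]
  -- helper: absorb higher powers
  have hpow : ∀ m n : ℕ, n ≤ m → (fun x : ℝ => (x - α)^m) =O[l] (fun x => (x-α)^n) := by
    intro m n hmn
    refine IsBigO.mono ?_ hls
    rw [isBigO_iff]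
    refine ⟨1, ?_⟩
    filter_upwards [Metric.ball_mem_nhds α one_pos] with x hx
    rw [Metric.mem_ball, Real.dist_eq] at hx
    simp only [norm_pow, Real.norm_eq_abs, one_mul]
    exact pow_le_pow_of_le_one (abs_nonneg _) hx.le hmn
  -- helper: (x-α)^n times continuous factor
  have mulO : ∀ (g : ℝ → ℝ) (n : ℕ), Continuous g →
      (fun x => (x - α)^n * g x) =O[l] (fun x => (x-α)^n) := by
    intro g n hg
    have h1 : g =O[l] (fun _ => (1:ℝ)) := ((hg.tendsto α).isBigO_one ℝ).mono hls
    simpa using (isBigO_refl (fun x : ℝ => (x-α)^n) l).mul h1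
  -- helper: division by deriv f
  have hinvO : (fun x => (deriv f x)⁻¹) =O[l] (fun _ => (1:ℝ)) :=
    ((hcd.tendsto.inv₀ hf'α).isBigO_one ℝ).mono hls
  have div_df_bigO : ∀ (N : ℝ → ℝ) (n : ℕ), (N =O[l] fun x => (x-α)^n) →
      (fun x => N x / deriv f x) =O[l] (fun x => (x-α)^n) := by
    intro N n hN
    have := hN.mul hinvO
    refine this.congr (fun x => ?_) (fun x => ?_)
    · rw [div_eq_mul_inv]
    · rw [mul_one]
  -- helper: division by f
  have hEinvf : (fun x => (x - α) / f x) =O[l] (fun _ => (1:ℝ)) := by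
    have hder : HasDerivAt f A α := (hdiffU α hαU).hasDerivAt
    have hslope := hasDerivAt_iff_tendsto_slope.mp hder
    have hll : l ≤ 𝓝[≠] α := nhdsWithin_mono α (fun x hx => hx.1)
    have h2 := (hslope.mono_left hll).inv₀ hf'α
    have h3 : Tendsto (fun x => (x - α)/f x) l (𝓝 A⁻¹) := by
      refine Tendsto.congr' ?_ h2
      filter_upwards [hmem] with x hx
      rw [slope_def_field, hroot, sub_zero, inv_div]
    exact h3.isBigO_one ℝ
  have div_f_bigO : ∀ (N : ℝ → ℝ) (n : ℕ), (N =O[l] fun x => (x-α)^(n+1)) →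
      (fun x => N x / f x) =O[l] (fun x => (x-α)^n) := by
    intro N n hN
    have h1 := (hN.mul (isBigO_refl (fun x : ℝ => (x-α)⁻¹) l)).mul hEinvf
    refine h1.congr' ?_ ?_
    · filter_upwards [hmem] with x hx
      have hxa : x - α ≠ 0 := sub_ne_zero.2 hx.1
      field_simp
      try ring
    · filter_upwards [hmem] with x hx
      have hxa : x - α ≠ 0 := sub_ne_zero.2 hx.1
      rw [mul_one, pow_succ, mul_inv_cancel_right₀ hxa]
  -- step 1 : Newton step expansion
  set Q : ℝ → ℝ := fun x => c₂*(x-α)^2 + (2*(c₃ - c₂^2))*(x-α)^3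
      + (3*c4 - 7*c₂*c₃ + 4*c₂^3)*(x-α)^4 with hQ
  set W1 : ℝ → ℝ := fun x => ((-6 : ℝ) * c₃^2 + (-10 : ℝ) * c₂ * c4 + (20 : ℝ) * c₂^2 * c₃ + (-8 : ℝ) * c₂^4) + ((-17 : ℝ) * c₃ * c4 + (21 : ℝ) * c₂ * c₃^2 + (8 : ℝ) * c₂^2 * c4 + (-12 : ℝ) * c₂^3 * c₃) * (x - α) + ((-12 : ℝ) * c4^2 + (28 : ℝ) * c₂ * c₃ * c4 + (-16 : ℝ) * c₂^3 * c4) * (x - α)^2 with hW1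
  have hs1 : (fun x => y x - α - Q x) =O[l] (fun x => (x - α)^5) := by
    have hN : (fun x => (x - α) * deriv f x - f x - Q x * deriv f x) =O[l]
        (fun x => (x-α)^5) := by
      have t1 : (fun x => (x-α)^5 * (A * W1 x)) =O[l] (fun x => (x-α)^5) := by
        refine mulO _ 5 ?_
        rw [hW1]; fun_prop
      have t2a : (fun x => (x-α)^1 * (1 - (c₂*(x-α) + (2*(c₃ - c₂^2))*(x-α)^2
          + (3*c4 - 7*c₂*c₃ + 4*c₂^3)*(x-α)^3))) =O[l] (fun x => (x-α)^1) := by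
        refine mulO _ 1 ?_
        fun_prop
      have t2 : (fun x => ((x - α) - Q x) *
          (deriv f x - (A + 2*A*c₂*(x-α) + 3*A*c₃*(x-α)^2 + 4*A*c4*(x-α)^3)))
          =O[l] (fun x => (x-α)^5) := by
        have := t2a.mul (h2.mono hls)
        refine this.congr (fun x => ?_) (fun x => by ring)
        rw [hQ]; ring
      have t3 := h1.mono hls
      have := (t1.add t2).sub t3
      refine this.congr (fun x => ?_) (fun x => by ring)
      rw [hQ, hW1]; ring
    have hNeq : ∀ᶠ x in l, y x - α - Q x =
        ((x - α) * deriv f x - f x - Q x * deriv f x) / deriv f x := by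
      filter_upwards [hdf_ne.filter_mono hls] with x hx
      rw [hy x]
      field_simp
      ring
    exact (div_df_bigO _ 5 hN).congr' (hNeq.mono fun x hx => hx.symm) EventuallyEq.rfl
  -- tendsto facts
  have hQtend : Tendsto Q l (𝓝 0) := by
    have hc : Continuous Q := by rw [hQ]; fun_prop
    have h0 : Q α = 0 := by simp [hQ]
    have := (hc.tendsto α).mono_left hls
    rwa [h0] at this
  have hpowtend : ∀ n : ℕ, 1 ≤ n → Tendsto (fun x : ℝ => (x-α)^n) l (𝓝 0) := by
    intro n hn
    have hc : Continuous fun x : ℝ => (x-α)^n := by fun_prop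
    have := (hc.tendsto α).mono_left hls
    simpa [zero_pow (by omega : n ≠ 0)] using this
  have hs1tend : Tendsto (fun x => y x - α - Q x) l (𝓝 0) :=
    hs1.trans_tendsto (hpowtend 5 (by norm_num))
  have hyt : Tendsto y l (𝓝 α) := by
    have := (hs1tend.add hQtend).add_const α
    rw [add_zero, zero_add] at this
    exact this.congr (fun x => by ring)
  -- y - α = O(e²)
  have hQO : Q =O[l] (fun x => (x-α)^2) := by
    have := mulO (fun x => c₂ + (2*(c₃ - c₂^2))*(x-α) + (3*c4 - 7*c₂*c₃ + 4*c₂^3)*(x-α)^2) 2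
      (by fun_prop)
    exact this.congr (fun x => by rw [hQ]; ring) (fun x => rfl)
  have hyO2 : (fun x => y x - α) =O[l] (fun x => (x-α)^2) := by
    have := (hs1.trans (hpow 5 2 (by norm_num))).add hQO
    exact this.congr (fun x => by ring) (fun x => rfl)
  have hy3O : (fun x => (y x - α)^3) =O[l] (fun x => (x-α)^5) := by
    have := (hyO2.pow 3).congr (fun x => rfl) (fun x : ℝ => by ring :
      ∀ x : ℝ, ((x-α)^2)^3 = (x-α)^6)
    exact this.trans (hpow 6 5 (by norm_num))
  -- step 2 : f ∘ y expansion
  set FF : ℝ → ℝ := fun x => c₂*(x-α)^2 + (2*(c₃ - c₂^2))*(x-α)^3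
      + (3*c4 - 7*c₂*c₃ + 5*c₂^3)*(x-α)^4 with hFF
  set W2 : ℝ → ℝ := fun x => ((4 : ℝ) * c₂^2 * c₃ + (-4 : ℝ) * c₂^4) + ((4 : ℝ) * c₂ * c₃^2 + (6 : ℝ) * c₂^2 * c4 + (-22 : ℝ) * c₂^3 * c₃ + (12 : ℝ) * c₂^5) * (x - α) + ((12 : ℝ) * c₂ * c₃ * c4 + (-28 : ℝ) * c₂^2 * c₃^2 + (-12 : ℝ) * c₂^3 * c4 + (44 : ℝ) * c₂^4 * c₃ + (-16 : ℝ) * c₂^6) * (x - α)^2 + ((9 : ℝ) * c₂ * c4^2 + (-42 : ℝ) * c₂^2 * c₃ * c4 + (49 : ℝ) * c₂^3 * c₃^2 + (24 : ℝ) * c₂^4 * c4 + (-56 : ℝ) * c₂^5 * c₃ + (16 : ℝ) * c₂^7) * (x - α)^3 with hW2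
  have hs2 : (fun x => f (y x) - A * FF x) =O[l] (fun x => (x-α)^5) := by
    have u1 : (fun x => f (y x) - (A*(y x - α) + A*c₂*(y x - α)^2)) =O[l]
        (fun x => (x-α)^5) := by
      have hcomp := h1b.comp_tendsto hyt
      exact (hcomp.congr (fun x => rfl) (fun x => rfl)).trans hy3O
    have u2 : (fun x => (x-α)^5 * (A * W2 x)) =O[l] (fun x => (x-α)^5) := by
      refine mulO _ 5 ?_
      rw [hW2]; fun_prop
    have u3 := hs1.const_mul_left A
    have u4 : (fun x => A*c₂*((y x - α - Q x)*(y x - α + Q x))) =O[l]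
        (fun x => (x-α)^5) := by
      have hsum : (fun x => y x - α + Q x) =O[l] (fun x => (x-α)^2) := hyO2.add hQO
      have := (hs1.mul hsum).const_mul_left (A*c₂)
      have h7 : (fun x : ℝ => (x-α)^5 * (x-α)^2) =O[l] (fun x => (x-α)^5) :=
        ((isBigO_refl _ l).congr (fun x => rfl) (fun x : ℝ => by ring :
          ∀ x : ℝ, (x-α)^5 * (x-α)^2 = (x-α)^7)).trans (hpow 7 5 (by norm_num))
      exact this.trans h7
    have := ((u1.add u2).add u3).add u4
    refine this.congr (fun x => ?_) (fun x => by ring)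
    simp only [hQ, hFF, hW2]; ring
  -- step 3 : t₁ = f(y)/f expansion
  set T : ℝ → ℝ := fun x => c₂*(x-α) + (2*c₃ - 3*c₂^2)*(x-α)^2 with hT
  set W3 : ℝ → ℝ := fun x => ((3 : ℝ) * c4 + (-10 : ℝ) * c₂ * c₃ + (8 : ℝ) * c₂^3) + ((-2 : ℝ) * c₃^2 + (-1 : ℝ) * c₂ * c4 + (3 : ℝ) * c₂^2 * c₃) * (x - α) + ((-2 : ℝ) * c₃ * c4 + (3 : ℝ) * c₂^2 * c4) * (x - α)^2 with hW3
  have hTO : T =O[l] (fun x => (x-α)^1) := by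
    have := mulO (fun x => c₂ + (2*c₃ - 3*c₂^2)*(x-α)) 1 (by fun_prop)
    exact this.congr (fun x => by rw [hT]; ring) (fun x => rfl)
  have hs3 : (fun x => f (y x) / f x - T x) =O[l] (fun x => (x-α)^3) := by
    have hnum : (fun x => f (y x) - T x * f x) =O[l] (fun x => (x-α)^4) := by
      have u1 := hs2.trans (hpow 5 4 (by norm_num))
      have u2 : (fun x => (x-α)^4 * (A * W3 x)) =O[l] (fun x => (x-α)^4) := by
        refine mulO _ 4 ?_
        rw [hW3]; fun_prop
      have u3 : (fun x => T x * (f x - (A*(x-α) + A*c₂*(x-α)^2 + A*c₃*(x-α)^3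
          + A*c4*(x-α)^4))) =O[l] (fun x => (x-α)^4) := by
        have := hTO.mul (h1.mono hls)
        have h6 : (fun x : ℝ => (x-α)^1 * (x-α)^5) =O[l] (fun x => (x-α)^4) :=
          ((isBigO_refl _ l).congr (fun x => rfl) (fun x : ℝ => by ring :
            ∀ x : ℝ, (x-α)^1 * (x-α)^5 = (x-α)^6)).trans (hpow 6 4 (by norm_num))
        exact this.trans h6
      have := (u1.add u2).sub u3
      refine this.congr (fun x => ?_) (fun x => by ring)
      simp only [hT, hFF, hW3]; ring
    have := div_f_bigO _ 3 hnum
    refine this.congr' ?_ EventuallyEq.rfl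
    filter_upwards [hmem] with x hx
    have hfx : f x ≠ 0 := hx.2
    field_simp
    try ring
  -- step 4 : G(t₁) expansion
  set GP : ℝ → ℝ := fun x => 1 + 2*T x + M₀*(T x)^2 with hGP
  have hTtend : Tendsto T l (𝓝 0) := by
    have hc : Continuous T := by rw [hT]; fun_prop
    have h0 : T α = 0 := by simp [hT]
    have := (hc.tendsto α).mono_left hls
    rwa [h0] at this
  have hs3tend : Tendsto (fun x => f (y x)/f x - T x) l (𝓝 0) :=
    hs3.trans_tendsto (hpowtend 3 (by norm_num))
  have htt : Tendsto (fun x => f (y x)/f x) l (𝓝 0) := by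
    have := hs3tend.add hTtend
    rw [add_zero] at this
    exact this.congr (fun x => by ring)
  have htO : (fun x => f (y x)/f x) =O[l] (fun x => (x-α)^1) := by
    have := (hs3.trans (hpow 3 1 (by norm_num))).add hTO
    exact this.congr (fun x => by ring) (fun x => rfl)
  have hs4 : (fun x => G (f (y x)/f x) - GP x) =O[l] (fun x => (x-α)^3) := by
    have ht3 : (fun x => (f (y x)/f x)^3) =O[l] (fun x => (x-α)^3) :=
      (htO.pow 3).congr (fun x => rfl) (fun x => by ring)
    have u1 : (fun x => G (f (y x)/f x) - (1 + 2*(f (y x)/f x) + M₀*(f (y x)/f x)^2))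
        =O[l] (fun x => (x-α)^3) := by
      have hcomp := hG3.comp_tendsto htt
      exact (hcomp.congr (fun x => rfl) (fun x => rfl)).trans ht3
    have u2 := hs3.const_mul_left 2
    have u3 : (fun x => M₀*((f (y x)/f x - T x)*(f (y x)/f x + T x))) =O[l]
        (fun x => (x-α)^3) := by
      have hb : (fun x => f (y x)/f x + T x) =O[l] (fun _ => (1:ℝ)) := by
        have := htt.add hTtend
        rw [add_zero] at this
        exact this.isBigO_one ℝ
      have := (hs3.mul hb).const_mul_left M₀
      exact this.congr (fun x => rfl) (fun x => by rw [mul_one])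
    have := (u1.add u2).add u3
    refine this.congr (fun x => ?_) (fun x => by ring)
    simp only [hGP]; ring
  -- step 5 : f(y)/f' expansion
  set PD : ℝ → ℝ := fun x => c₂*(x-α)^2 + (2*c₃ - 4*c₂^2)*(x-α)^3
      + (3*c4 - 14*c₂*c₃ + 13*c₂^3)*(x-α)^4 with hPD
  set W5 : ℝ → ℝ := fun x => ((-6 : ℝ) * c₃^2 + (-10 : ℝ) * c₂ * c4 + (40 : ℝ) * c₂^2 * c₃ + (-26 : ℝ) * c₂^4) + ((-17 : ℝ) * c₃ * c4 + (42 : ℝ) * c₂ * c₃^2 + (16 : ℝ) * c₂^2 * c4 + (-39 : ℝ) * c₂^3 * c₃) * (x - α) + ((-12 : ℝ) * c4^2 + (56 : ℝ) * c₂ * c₃ * c4 + (-52 : ℝ) * c₂^3 * c4) * (x - α)^2 with hW5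
  have hPDO : PD =O[l] (fun x => (x-α)^2) := by
    have := mulO (fun x => c₂ + (2*c₃ - 4*c₂^2)*(x-α) + (3*c4 - 14*c₂*c₃ + 13*c₂^3)*(x-α)^2) 2
      (by fun_prop)
    exact this.congr (fun x => by rw [hPD]; ring) (fun x => rfl)
  have hs5 : (fun x => f (y x) / deriv f x - PD x) =O[l] (fun x => (x-α)^5) := by
    have hnum : (fun x => f (y x) - PD x * deriv f x) =O[l] (fun x => (x-α)^5) := by
      have u2 : (fun x => (x-α)^5 * (A * W5 x)) =O[l] (fun x => (x-α)^5) := by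
        refine mulO _ 5 ?_
        rw [hW5]; fun_prop
      have u3 : (fun x => PD x * (deriv f x - (A + 2*A*c₂*(x-α) + 3*A*c₃*(x-α)^2
          + 4*A*c4*(x-α)^3))) =O[l] (fun x => (x-α)^5) := by
        have := hPDO.mul (h2.mono hls)
        have h6 : (fun x : ℝ => (x-α)^2 * (x-α)^4) =O[l] (fun x => (x-α)^5) :=
          ((isBigO_refl _ l).congr (fun x => rfl) (fun x : ℝ => by ring :
            ∀ x : ℝ, (x-α)^2 * (x-α)^4 = (x-α)^6)).trans (hpow 6 5 (by norm_num))
        exact this.trans h6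
      have := (hs2.add u2).sub u3
      refine this.congr (fun x => ?_) (fun x => by ring)
      simp only [hPD, hFF, hW5]; ring
    have := div_df_bigO _ 5 hnum
    refine this.congr' ?_ EventuallyEq.rfl
    filter_upwards [hdf_ne.filter_mono hls] with x hx
    field_simp
    try ring
  -- step 6 : final assembly
  set W6 : ℝ → ℝ := fun x => ((-8 : ℝ) * c₃^2 + (-6 : ℝ) * c₂ * c4 + (56 : ℝ) * c₂^2 * c₃ + (-6 : ℝ) * c₂^2 * c₃ * M₀ + (-50 : ℝ) * c₂^4 + (10 : ℝ) * c₂^4 * M₀) + ((-12 : ℝ) * c₃ * c4 + (56 : ℝ) * c₂ * c₃^2 + (-12 : ℝ) * c₂ * c₃^2 * M₀ + (18 : ℝ) * c₂^2 * c4 + (-3 : ℝ) * c₂^2 * c4 * M₀ + (-136 : ℝ) * c₂^3 * c₃ + (54 : ℝ) * c₂^3 * c₃ * M₀ + (78 : ℝ) * c₂^5 + (-46 : ℝ) * c₂^5 * M₀) * (x - α) + ((-8 : ℝ) * c₃^3 * M₀ + (-12 : ℝ) * c₂ * c₃ * c4 * M₀ + (96 : ℝ) * c₂^2 * c₃^2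 * M₀ + (18 : ℝ) * c₂^3 * c4 * M₀ + (-202 : ℝ) * c₂^4 * c₃ * M₀ + (114 : ℝ) * c₂^6 * M₀) * (x - α)^2 + ((-12 : ℝ) * c₃^2 * c4 * M₀ + (56 : ℝ) * c₂ * c₃^3 * M₀ + (36 : ℝ) * c₂^2 * c₃ * c4 * M₀ + (-220 : ℝ) * c₂^3 * c₃^2 * M₀ + (-27 : ℝ) * c₂^4 * c4 * M₀ + (282 : ℝ) * c₂^5 * c₃ * M₀ + (-117 : ℝ) * c₂^7 * M₀) * (x - α)^3 with hW6
  have goal1 : (fun x => z x - α + c₂ * ((M₀ - 5) * c₂ ^ 2 + c₃) * (x - α) ^ 4)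
      =O[l] (fun x => (x - α) ^ 5) := by
    have u1 : (fun x => (x-α)^5 * W6 x) =O[l] (fun x => (x-α)^5) := by
      refine mulO _ 5 ?_
      rw [hW6]; fun_prop
    have u2 : (fun x => (G (f (y x)/f x) - GP x) * PD x) =O[l] (fun x => (x-α)^5) := by
      have := hs4.mul hPDO
      exact this.congr (fun x => rfl) (fun x => by ring)
    have u3 : (fun x => (f (y x)/deriv f x - PD x) * GP x) =O[l] (fun x => (x-α)^5) := by
      have hGPone : GP =O[l] (fun _ => (1:ℝ)) := by
        have hc : Continuous GP := by rw [hGP, hT]; fun_prop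
        exact ((hc.tendsto α).isBigO_one ℝ).mono hls
      have := hs5.mul hGPone
      exact this.congr (fun x => rfl) (fun x => by rw [mul_one])
    have u4 : (fun x => (G (f (y x)/f x) - GP x) * (f (y x)/deriv f x - PD x)) =O[l]
        (fun x => (x-α)^5) := by
      have := hs4.mul hs5
      have h8 : (fun x : ℝ => (x-α)^3 * (x-α)^5) =O[l] (fun x => (x-α)^5) :=
        ((isBigO_refl _ l).congr (fun x => rfl) (fun x : ℝ => by ring :
          ∀ x : ℝ, (x-α)^3 * (x-α)^5 = (x-α)^8)).trans (hpow 8 5 (by norm_num))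
      exact this.trans h8
    have := (((hs1.add u1).sub u2).sub u3).sub u4
    refine this.congr (fun x => ?_) (fun x => by ring)
    rw [hz x]
    simp only [hQ, hGP, hPD, hW6, hT]; ring
  refine ⟨goal1, ?_⟩
  -- part 2 : fourth-order bound
  have goal2 : (fun x => z x - α) =O[l] (fun x => (x - α) ^ 4) := by
    have u1 := goal1.trans (hpow 5 4 (by norm_num))
    have u2 : (fun x => c₂ * ((M₀ - 5) * c₂ ^ 2 + c₃) * (x - α) ^ 4) =O[l]
        (fun x => (x - α)^4) := by
      have := mulO (fun _ => c₂ * ((M₀ - 5) * c₂ ^ 2 + c₃)) 4 continuous_const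
      exact this.congr (fun x => by ring) (fun x => rfl)
    have := u1.sub u2
    exact this.congr (fun x => by ring) (fun x => rfl)
  rw [isBigO_iff] at goal2
  obtain ⟨C, hC⟩ := goal2
  rw [hldef, eventually_nhdsWithin_iff, Metric.eventually_nhds_iff] at hC
  obtain ⟨δ, hδ0, hδ⟩ := hC
  refine ⟨δ, hδ0, |C| + 1, by positivity, ?_⟩
  intro x hx1 hx2 hfx
  have hxα : x ≠ α := by
    intro h; rw [h] at hx1; simp at hx1
  have hd : dist x α < δ := by rwa [Real.dist_eq]
  have := hδ hd ⟨hxα, hfx⟩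
  rw [Real.norm_eq_abs, Real.norm_eq_abs, abs_pow] at this
  calc |z x - α| ≤ C * |x - α| ^ 4 := this
    _ ≤ (|C| + 1) * |x - α| ^ 4 := by
        have : C ≤ |C| + 1 := le_trans (le_abs_self C) (by linarith [abs_nonneg C])
        nlinarith [pow_nonneg (abs_nonneg (x - α)) 4]
end

section
/- Let f : ℝ → ℝ be C^∞ on an open set containing α, with f(α) = 0 and f'(α) ≠ 0. Let κ ≠ 0 and g₀, g₁, g₂ ∈ ℝ. Let G₀, G₁ : ℝ → ℝ and G₂ : ℝ × ℝ → ℝ be C^∞ with G₀(0) = G₁(0) = G₂(0,0) = 1. For x near α define w(x) = x − κ·f(x), y(x) = x − f(x)/f[x,w], and Φ(x) = y(x) − [ g₀·G₀(t₁)/f[y,w] + g₁·G₁(t₂)/f[y,x] + g₂·G₂(t₁,t₂)/f[x,w] ]·f(y(x)), where t₁ = f(y)/f(x), t₂ = f(y)/f(w), f[a,b] = (f(a) − f(b))/(a − b). If g₀ + g₁ + g₂ = 1, then Φ(x) − α = O((x − α)³) as x → α through points where all denominators of the scheme are nonzero. -/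
open Topology Filter Asymptotics

/-- Divided difference `f[a,b] = (f a - f b)/(a - b)`. -/
noncomputable def dd (f : ℝ → ℝ) (a b : ℝ) : ℝ := (f a - f b) / (a - b)

open Set intervalIntegral in
lemma dd_eq_integral (f : ℝ → ℝ) {s : Set ℝ} (hs : Convex ℝ s)
    (hd : ∀ z ∈ s, HasDerivAt f (deriv f z) z)
    (hder : ContinuousOn (deriv f) s) {a b : ℝ} (ha : a ∈ s) (hb : b ∈ s) (hab : a ≠ b) :
    dd f a b = ∫ t in (0:ℝ)..1, deriv f (a + t * (b - a)) := by
  have hmem : ∀ t ∈ Set.Icc (0:ℝ) 1, a + t * (b - a) ∈ s := by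
    intro t ht
    have := hs ha hb (by linarith [ht.1, ht.2] : (0:ℝ) ≤ 1 - t) ht.1 (by ring)
    simpa [smul_eq_mul, show (1 - t) * a + t * b = a + t * (b - a) by ring] using this
  have key : ∀ t ∈ Set.uIcc (0:ℝ) 1,
      HasDerivAt (fun u => f (a + u * (b - a))) (deriv f (a + t * (b - a)) * (b - a)) t := by
    intro t ht
    rw [Set.uIcc_of_le zero_le_one] at ht
    have haff : HasDerivAt (fun u : ℝ => a + u * (b - a)) (b - a) t := by
      simpa using ((hasDerivAt_id t).mul_const (b - a)).const_add a
    exact (hd _ (hmem t ht)).comp t haff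
  have hcm : ContinuousOn (fun t : ℝ => a + t * (b - a)) (Set.uIcc (0:ℝ) 1) := by
    fun_prop
  have hcont : ContinuousOn (fun t : ℝ => deriv f (a + t * (b - a)) * (b - a))
      (Set.uIcc (0:ℝ) 1) := by
    apply ContinuousOn.mul _ continuousOn_const
    apply hder.comp hcm
    intro t ht
    rw [Set.uIcc_of_le zero_le_one] at ht
    exact hmem t ht
  have hint := intervalIntegral.integral_eq_sub_of_hasDerivAt key
    (hcont.intervalIntegrable)
  rw [intervalIntegral.integral_mul_const] at hint
  have hba : b - a ≠ 0 := sub_ne_zero.2 (Ne.symm hab)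
  have h2 : (∫ t in (0:ℝ)..1, deriv f (a + t * (b - a))) = (f b - f a) / (b - a) := by
    rw [eq_div_iff hba, hint]; norm_num
  rw [h2]
  unfold dd
  rw [div_eq_div_iff (sub_ne_zero.2 hab) hba]; ring


section
variable (f : ℝ → ℝ) {s : Set ℝ} (hs : Convex ℝ s)
    (hd : ∀ z ∈ s, HasDerivAt f (deriv f z) z)
    (hder : ContinuousOn (deriv f) s) {L : ℝ} (hL0 : 0 ≤ L)
    (hL : ∀ z ∈ s, ∀ z' ∈ s, |deriv f z - deriv f z'| ≤ L * |z - z'|)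

omit hd hder in include hs in
lemma aux_mem : ∀ (a b : ℝ), a ∈ s → b ∈ s → ∀ t ∈ Set.Icc (0:ℝ) 1, a + t * (b - a) ∈ s := by
  intro a b ha hb t ht
  have := hs ha hb (by linarith [ht.1, ht.2] : (0:ℝ) ≤ 1 - t) ht.1 (by ring)
  simpa [smul_eq_mul, show (1 - t) * a + t * b = a + t * (b - a) by ring] using this

include hs hd hder hL0 hL in
lemma dd_sub_dd {a b a' b' : ℝ} (ha : a ∈ s) (hb : b ∈ s) (ha' : a' ∈ s) (hb' : b' ∈ s)
    (hab : a ≠ b) (hab' : a' ≠ b') :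
    |dd f a b - dd f a' b'| ≤ L * (|a - a'| + |b - b'|) := by
  rw [dd_eq_integral f hs hd hder ha hb hab, dd_eq_integral f hs hd hder ha' hb' hab']
  have hcont : ∀ (c d : ℝ), c ∈ s → d ∈ s → ContinuousOn
      (fun t : ℝ => deriv f (c + t * (d - c))) (Set.uIcc (0:ℝ) 1) := by
    intro c d hc hdm
    apply hder.comp (by fun_prop)
    intro t ht
    rw [Set.uIcc_of_le zero_le_one] at ht
    exact aux_mem hs c d hc hdm t ht
  rw [← intervalIntegral.integral_sub ((hcont a b ha hb).intervalIntegrable)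
    ((hcont a' b' ha' hb').intervalIntegrable)]
  have hb1 : |(1:ℝ) - 0| = 1 := by norm_num
  have := intervalIntegral.norm_integral_le_of_norm_le_const (a := (0:ℝ)) (b := 1)
    (C := L * (|a - a'| + |b - b'|))
    (f := fun t => deriv f (a + t * (b - a)) - deriv f (a' + t * (b' - a'))) ?_
  · rw [hb1, mul_one] at this
    simpa [Real.norm_eq_abs] using this
  · intro t ht
    rw [Set.uIoc_of_le zero_le_one] at ht
    have ht' : t ∈ Set.Icc (0:ℝ) 1 := ⟨le_of_lt ht.1, ht.2⟩
    have h1 := hL _ (aux_mem hs a b ha hb t ht') _ (aux_mem hs a' b' ha' hb' t ht')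
    rw [Real.norm_eq_abs]
    refine h1.trans ?_
    have harg : |(a + t * (b - a)) - (a' + t * (b' - a'))| ≤ |a - a'| + |b - b'| := by
      have : (a + t * (b - a)) - (a' + t * (b' - a')) = (1 - t) * (a - a') + t * (b - b') := by
        ring
      rw [this]
      calc |(1 - t) * (a - a') + t * (b - b')| ≤ |(1 - t) * (a - a')| + |t * (b - b')| :=
            abs_add_le _ _
        _ ≤ |a - a'| + |b - b'| := by
            rw [abs_mul, abs_mul]
            have h1t : |1 - t| ≤ 1 := by rw [abs_of_nonneg (by linarith [ht'.2])]; linarith [ht'.1]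
            have htt : |t| ≤ 1 := by rw [abs_of_nonneg ht'.1]; exact ht'.2
            nlinarith [abs_nonneg (a - a'), abs_nonneg (b - b')]
    nlinarith [abs_nonneg ((a + t * (b - a)) - (a' + t * (b' - a')))]

include hs hd hder hL0 hL in
lemma dd_sub_deriv {a b z₀ : ℝ} (ha : a ∈ s) (hb : b ∈ s) (hz : z₀ ∈ s) (hab : a ≠ b) :
    |dd f a b - deriv f z₀| ≤ L * (|a - z₀| + |b - z₀|) := by
  rw [dd_eq_integral f hs hd hder ha hb hab]
  have hconst : deriv f z₀ = ∫ _t in (0:ℝ)..1, deriv f z₀ := by simp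
  rw [hconst]
  have hcont : ContinuousOn (fun t : ℝ => deriv f (a + t * (b - a))) (Set.uIcc (0:ℝ) 1) := by
    apply hder.comp (by fun_prop)
    intro t ht
    rw [Set.uIcc_of_le zero_le_one] at ht
    exact aux_mem hs a b ha hb t ht
  rw [← intervalIntegral.integral_sub (hcont.intervalIntegrable)
    (intervalIntegrable_const)]
  have := intervalIntegral.norm_integral_le_of_norm_le_const (a := (0:ℝ)) (b := 1)
    (C := L * (|a - z₀| + |b - z₀|))
    (f := fun t => deriv f (a + t * (b - a)) - deriv f z₀) ?_
  · rw [show |(1:ℝ) - 0| = 1 by norm_num, mul_one] at this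
    simpa [Real.norm_eq_abs] using this
  · intro t ht
    rw [Set.uIoc_of_le zero_le_one] at ht
    have ht' : t ∈ Set.Icc (0:ℝ) 1 := ⟨le_of_lt ht.1, ht.2⟩
    have h1 := hL _ (aux_mem hs a b ha hb t ht') _ hz
    rw [Real.norm_eq_abs]
    refine h1.trans ?_
    have harg : |(a + t * (b - a)) - z₀| ≤ |a - z₀| + |b - z₀| := by
      have : (a + t * (b - a)) - z₀ = (1 - t) * (a - z₀) + t * (b - z₀) := by ring
      rw [this]
      calc |(1 - t) * (a - z₀) + t * (b - z₀)| ≤ |(1 - t) * (a - z₀)| + |t * (b - z₀)| :=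
            abs_add_le _ _
        _ ≤ |a - z₀| + |b - z₀| := by
            rw [abs_mul, abs_mul]
            have h1t : |1 - t| ≤ 1 := by rw [abs_of_nonneg (by linarith [ht'.2])]; linarith [ht'.1]
            have htt : |t| ≤ 1 := by rw [abs_of_nonneg ht'.1]; exact ht'.2
            nlinarith [abs_nonneg (a - z₀), abs_nonneg (b - z₀)]
    nlinarith [abs_nonneg ((a + t * (b - a)) - z₀)]
end


lemma abs_le_isBigO {l : Filter ℝ} {u v : ℝ → ℝ} (h : ∀ᶠ x in l, |u x| ≤ v x) :
    u =O[l] v := by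
  apply IsBigO.of_bound 1
  filter_upwards [h] with x hx
  rw [one_mul, Real.norm_eq_abs, Real.norm_eq_abs]
  exact hx.trans (le_abs_self _)

/-- For the derivative-free scheme (FD3), the sum condition `g₀ + g₁ + g₂ = 1`
alone (with only the normalizations `G₀ 0 = G₁ 0 = G₂ 0 0 = 1`) annihilates the
quadratic and cubic error terms: `Φ x - α = O((x - α)³)` as `x → α` through
points where all denominators of the scheme are nonzero. -/
theorem fd3_sum_condition_order_three
    (f G₀ G₁ : ℝ → ℝ) (G₂ : ℝ → ℝ → ℝ) (α κ : ℝ) (hκ : κ ≠ 0)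
    (g₀ g₁ g₂ : ℝ)
    (U : Set ℝ) (hU : IsOpen U) (hαU : α ∈ U)
    (hf : ContDiffOn ℝ (⊤ : ℕ∞) f U)
    (hroot : f α = 0) (hf'α : deriv f α ≠ 0)
    (hG₀ : ContDiff ℝ (⊤ : ℕ∞) G₀) (hG₁ : ContDiff ℝ (⊤ : ℕ∞) G₁)
    (hG₂ : ContDiff ℝ (⊤ : ℕ∞) (fun p : ℝ × ℝ => G₂ p.1 p.2))
    (hG₀0 : G₀ 0 = 1) (hG₁0 : G₁ 0 = 1) (hG₂0 : G₂ 0 0 = 1)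
    (w y Φ : ℝ → ℝ)
    (hw : ∀ x, w x = x - κ * f x)
    (hy : ∀ x, y x = x - f x / dd f x (w x))
    (hΦ : ∀ x, Φ x = y x -
      (g₀ * G₀ (f (y x) / f x) / dd f (y x) (w x) +
       g₁ * G₁ (f (y x) / f (w x)) / dd f (y x) x +
       g₂ * G₂ (f (y x) / f x) (f (y x) / f (w x)) / dd f x (w x)) * f (y x))
    (hsum : g₀ + g₁ + g₂ = 1) :
    (fun x => Φ x - α)
      =O[𝓝[{x : ℝ | f x ≠ 0 ∧ f (w x) ≠ 0 ∧ x ≠ w x ∧ y x ≠ w x ∧ y x ≠ x ∧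
            dd f x (w x) ≠ 0 ∧ dd f (y x) (w x) ≠ 0 ∧ dd f (y x) x ≠ 0}] α]
      (fun x => (x - α) ^ 3) := by
  classical
  set S : Set ℝ := {x : ℝ | f x ≠ 0 ∧ f (w x) ≠ 0 ∧ x ≠ w x ∧ y x ≠ w x ∧ y x ≠ x ∧
      dd f x (w x) ≠ 0 ∧ dd f (y x) (w x) ≠ 0 ∧ dd f (y x) x ≠ 0} with hSdef
  set F : Filter ℝ := 𝓝[S] α with hFdef
  set c₁ : ℝ := deriv f α with hc₁def
  have hc₁ : c₁ ≠ 0 := hf'α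
  -- basic geometry
  obtain ⟨r0, hr0, hball0⟩ := Metric.isOpen_iff.1 hU α hαU
  set s : Set ℝ := Metric.closedBall α (r0 / 2) with hsdef
  have hsU : s ⊆ U := fun z hz => hball0 (lt_of_le_of_lt (Metric.mem_closedBall.1 hz)
    (by linarith))
  have hsconv : Convex ℝ s := convex_closedBall α (r0 / 2)
  have hscomp : IsCompact s := isCompact_closedBall α (r0 / 2)
  have hαs : α ∈ s := Metric.mem_closedBall_self (by linarith)
  have hsnhds : s ∈ 𝓝 α := Metric.closedBall_mem_nhds α (by linarith)
  -- differentiability facts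
  have hd : ∀ z ∈ U, HasDerivAt f (deriv f z) z := fun z hz =>
    (((hf.differentiableOn (by simp)) z hz).differentiableAt (hU.mem_nhds hz)).hasDerivAt
  have hds : ∀ z ∈ s, HasDerivAt f (deriv f z) z := fun z hz => hd z (hsU hz)
  have hder : ContinuousOn (deriv f) U := hf.continuousOn_deriv_of_isOpen hU (by simp)
  have hders : ContinuousOn (deriv f) s := hder.mono hsU
  have hf2 : ContDiffOn ℝ (⊤ : ℕ∞) (deriv f) U := hf.deriv_of_isOpen hU (by simp)
  have hder2 : ContinuousOn (deriv (deriv f)) s :=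
    (hf2.continuousOn_deriv_of_isOpen hU (by simp)).mono hsU
  obtain ⟨L0, hL0b⟩ := hscomp.exists_bound_of_continuousOn hder2
  set L : ℝ := max L0 0 with hLdef
  have hLnn : 0 ≤ L := le_max_right _ _
  have hLip : ∀ z ∈ s, ∀ z' ∈ s, |deriv f z - deriv f z'| ≤ L * |z - z'| := by
    intro z hz z' hz'
    have := Convex.norm_image_sub_le_of_norm_deriv_le (f := deriv f) (C := L)
      (fun x hx => (((hf2.differentiableOn (by simp)) x (hsU hx)).differentiableAt
        (hU.mem_nhds (hsU hx))))
      (fun x hx => (hL0b x hx).trans (le_max_left _ _)) hsconv hz' hz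
    simpa [Real.norm_eq_abs] using this
  obtain ⟨M0, hM0⟩ := hscomp.exists_bound_of_continuousOn hders
  set M1 : ℝ := max M0 0 with hM1def
  have hM1nn : 0 ≤ M1 := le_max_right _ _
  have hLipf : ∀ a ∈ s, ∀ b ∈ s, |f a - f b| ≤ M1 * |a - b| := by
    intro a ha b hb
    have := Convex.norm_image_sub_le_of_norm_deriv_le (f := f) (C := M1)
      (fun x hx => (((hf.differentiableOn (by simp)) x (hsU hx)).differentiableAt
        (hU.mem_nhds (hsU hx))))
      (fun x hx => (hM0 x hx).trans (le_max_left _ _)) hsconv hb ha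
    simpa [Real.norm_eq_abs] using this
  -- filter basics
  have hmemS : ∀ᶠ x in F, x ∈ S := eventually_mem_nhdsWithin
  have htx : Tendsto (fun x : ℝ => x) F (𝓝 α) := tendsto_id.mono_left nhdsWithin_le_nhds
  set E : ℝ → ℝ := fun x => x - α with hEdef
  have hE0 : Tendsto E F (𝓝 0) := by
    simpa using htx.sub_const α
  have hxs : ∀ᶠ x in F, x ∈ s := htx hsnhds
  have hxα : ∀ᶠ x in F, x ≠ α := by
    filter_upwards [hmemS] with x hx
    intro h; exact hx.1 (h ▸ hroot)
  -- f is O(E)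
  have hfxO : (fun x => f x) =O[F] E := by
    refine (abs_le_isBigO ?_).trans (((isBigO_refl E F).norm_left).const_mul_left M1)
    filter_upwards [hxs] with x hx
    have := hLipf x hx α hαs
    simpa [hroot, Real.norm_eq_abs] using this
  -- w
  have hwO : (fun x => w x - α) =O[F] E := by
    have h1 : (fun x => E x - κ * f x) =O[F] E :=
      (isBigO_refl E F).sub (hfxO.const_mul_left κ)
    refine h1.congr' (Eventually.of_forall fun x => ?_) EventuallyEq.rfl
    show E x - κ * f x = w x - α
    rw [hw x]; simp only [hEdef]; ring
  have htwα : Tendsto w F (𝓝 α) := by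
    have h1 := hwO.trans_tendsto hE0
    have := h1.add_const α
    simpa using this
  have hws : ∀ᶠ x in F, w x ∈ s := htwα hsnhds
  have hwα : ∀ᶠ x in F, w x ≠ α := by
    filter_upwards [hmemS] with x hx
    intro h; exact hx.2.1 (h ▸ hroot)
  -- generic dd estimate
  have ddO : ∀ (a b : ℝ → ℝ), (∀ᶠ x in F, a x ∈ s) → (∀ᶠ x in F, b x ∈ s) →
      (∀ᶠ x in F, a x ≠ b x) →
      (fun x => a x - α) =O[F] E → (fun x => b x - α) =O[F] E →
      (fun x => dd f (a x) (b x) - c₁) =O[F] E := by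
    intro a b has hbs hne haO hbO
    refine (abs_le_isBigO ?_).trans
      (((haO.norm_left.add hbO.norm_left).const_mul_left L))
    filter_upwards [has, hbs, hne] with x h1 h2 h3
    simpa [Real.norm_eq_abs] using dd_sub_deriv f hsconv hds hders hLnn hLip h1 h2 hαs h3
  -- generic inverse estimates
  have invO : ∀ (D : ℝ → ℝ), ((fun x => D x - c₁) =O[F] E) → (∀ᶠ x in F, D x ≠ 0) →
      ((fun x => (D x)⁻¹) =O[F] (fun _ => (1:ℝ)) ∧
       (fun x => (D x)⁻¹ - c₁⁻¹) =O[F] E) := by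
    intro D hD hDne
    have htD : Tendsto D F (𝓝 c₁) := by
      have h1 := (hD.trans_tendsto hE0).add_const c₁
      simpa using h1
    have hev : ∀ᶠ x in F, |c₁| / 2 < |D x| :=
      htD.abs.eventually (eventually_gt_nhds (half_lt_self (abs_pos.2 hc₁)))
    have hc₁pos : (0:ℝ) < |c₁| := abs_pos.2 hc₁
    have hinv1 : (fun x => (D x)⁻¹) =O[F] (fun _ => (1:ℝ)) := by
      apply IsBigO.of_bound (2 / |c₁|)
      filter_upwards [hev] with x hx
      rw [Real.norm_eq_abs, abs_inv, norm_one, mul_one]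
      have h2 : (0:ℝ) < |c₁| / 2 := by positivity
      calc |D x|⁻¹ ≤ (|c₁| / 2)⁻¹ := by
            apply inv_anti₀ h2 hx.le
        _ = 2 / |c₁| := by rw [inv_div]
    have hinv2 : (fun x => (D x)⁻¹ - c₁⁻¹) =O[F] E := by
      have hid : ∀ᶠ x in F, (c₁ - D x) * (D x)⁻¹ * c₁⁻¹ = (D x)⁻¹ - c₁⁻¹ := by
        filter_upwards [hDne] with x hx
        field_simp
      have hcd : (fun x => c₁ - D x) =O[F] E := by
        have := hD.neg_left
        refine this.congr' (Eventually.of_forall fun x => by ring) EventuallyEq.rfl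
      have h3 : (fun x => (c₁ - D x) * (D x)⁻¹ * c₁⁻¹) =O[F] E := by
        have h4 := (hcd.mul hinv1).mul (isBigO_const_const (c₁⁻¹) (one_ne_zero) F :
          (fun _ : ℝ => c₁⁻¹) =O[F] fun _ => (1:ℝ))
        refine h4.trans_eventuallyEq (Eventually.of_forall fun x => by ring)
      exact h3.congr' hid EventuallyEq.rfl
    exact ⟨hinv1, hinv2⟩
  -- the three divided-difference denominators are handled after y-estimates for y's
  -- D₂ = dd f x (w x)
  have hD₂O : (fun x => dd f x (w x) - c₁) =O[F] E :=
    ddO (fun x => x) w hxs hws (by filter_upwards [hmemS] with x hx; exact hx.2.2.1)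
      (isBigO_refl E F) hwO
  have hD₂ne : ∀ᶠ x in F, dd f x (w x) ≠ 0 := by
    filter_upwards [hmemS] with x hx; exact hx.2.2.2.2.2.1
  obtain ⟨hD₂inv1, hD₂inv2⟩ := invO (fun x => dd f x (w x)) hD₂O hD₂ne
  -- the y identity
  have hfxdd : ∀ᶠ x in F, f x = dd f x α * (x - α) := by
    filter_upwards [hxα] with x hx
    rw [dd]
    field_simp [sub_ne_zero.2 hx, hroot]
    rw [hroot, sub_zero]
  have hyid : (fun x => y x - α) =ᶠ[F]
      (fun x => E x * (dd f x (w x) - dd f x α) * (dd f x (w x))⁻¹) := by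
    filter_upwards [hxα, hD₂ne, hfxdd] with x hx hdd hfx
    rw [hy x]
    rw [hfx]
    field_simp [hEdef]
    ring
  have hddsub : (fun x => dd f x (w x) - dd f x α) =O[F] (fun x => w x - α) := by
    refine (abs_le_isBigO ?_).trans
      (((isBigO_refl (fun x => w x - α) F).norm_left).const_mul_left L)
    filter_upwards [hxs, hws, hxα,
      (by filter_upwards [hmemS] with x hx; exact hx.2.2.1 : ∀ᶠ x in F, x ≠ w x)]
      with x h1 h2 h3 h4
    have := dd_sub_dd f hsconv hds hders hLnn hLip h1 h2 h1 hαs h4 h3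
    simp only [sub_self, abs_zero, zero_add] at this
    simpa [Real.norm_eq_abs, abs_sub_comm (w x) α] using this
  have hyO : (fun x => y x - α) =O[F] (fun x => E x * (w x - α)) := by
    have h1 := ((isBigO_refl E F).mul hddsub).mul hD₂inv1
    have h2 := h1.trans_eventuallyEq
      (Eventually.of_forall (fun x => by rw [mul_one] : ∀ x, E x * (w x - α) * 1 = E x * (w x - α)))
    exact h2.congr' hyid.symm EventuallyEq.rfl
  have hyO2 : (fun x => y x - α) =O[F] (fun x => E x * E x) :=
    hyO.trans ((isBigO_refl E F).mul hwO)
  have hEE : (fun x => E x * E x) =O[F] E := by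
    apply IsBigO.of_bound 1
    filter_upwards [hE0.abs.eventually (eventually_lt_nhds (by norm_num : |(0:ℝ)| < 1))]
      with x hx
    rw [Real.norm_eq_abs, Real.norm_eq_abs, abs_mul, one_mul]
    nlinarith [abs_nonneg (E x)]
  have hyOE : (fun x => y x - α) =O[F] E := hyO2.trans hEE
  have hty : Tendsto y F (𝓝 α) := by
    have h1 := (hyOE.trans_tendsto hE0).add_const α
    simpa using h1
  have hys : ∀ᶠ x in F, y x ∈ s := hty hsnhds
  -- f (y x)
  have hfyO : (fun x => f (y x)) =O[F] (fun x => E x * (w x - α)) := by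
    refine (abs_le_isBigO ?_).trans ((hyO.norm_left).const_mul_left M1)
    filter_upwards [hys] with x hx
    have := hLipf (y x) hx α hαs
    simpa [hroot, Real.norm_eq_abs] using this
  -- inverse of f along a function
  have invf : ∀ (a : ℝ → ℝ), (∀ᶠ x in F, a x ∈ s) → (∀ᶠ x in F, a x ≠ α) →
      ((fun x => a x - α) =O[F] E) →
      (fun x => (f (a x))⁻¹) =O[F] (fun x => (a x - α)⁻¹) := by
    intro a has hne haO
    have hdda : (fun x => dd f (a x) α - c₁) =O[F] E :=
      ddO a (fun _ => α) has (Eventually.of_forall fun _ => hαs) hne haO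
        (by simpa using (isBigO_zero E F : (fun _ : ℝ => (0:ℝ)) =O[F] E))
    have htda : Tendsto (fun x => dd f (a x) α) F (𝓝 c₁) := by
      have h1 := (hdda.trans_tendsto hE0).add_const c₁
      simpa using h1
    have hev : ∀ᶠ x in F, |c₁| / 2 < |dd f (a x) α| :=
      htda.abs.eventually (eventually_gt_nhds (half_lt_self (abs_pos.2 hc₁)))
    apply IsBigO.of_bound (2 / |c₁|)
    filter_upwards [hev, hne, has] with x h1 h2 h3
    have hfa : f (a x) = dd f (a x) α * (a x - α) := by
      rw [dd]; field_simp [sub_ne_zero.2 h2, hroot]; rw [hroot, sub_zero]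
    have habs : (0:ℝ) < |a x - α| := abs_pos.2 (sub_ne_zero.2 h2)
    have hc₁pos : (0:ℝ) < |c₁| := abs_pos.2 hc₁
    rw [hfa, Real.norm_eq_abs, Real.norm_eq_abs, abs_inv, abs_inv, abs_mul, mul_inv]
    calc |dd f (a x) α|⁻¹ * |a x - α|⁻¹ ≤ (|c₁| / 2)⁻¹ * |a x - α|⁻¹ := by
          apply mul_le_mul_of_nonneg_right _ (by positivity)
          exact inv_anti₀ (by positivity) h1.le
      _ = 2 / |c₁| * |a x - α|⁻¹ := by rw [inv_div]
  have hfxinv : (fun x => (f x)⁻¹) =O[F] (fun x => (x - α)⁻¹) :=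
    invf (fun x => x) hxs hxα (isBigO_refl E F)
  have hfwinv : (fun x => (f (w x))⁻¹) =O[F] (fun x => (w x - α)⁻¹) :=
    invf w hws hwα hwO
  -- t₁ and t₂
  set t₁ : ℝ → ℝ := fun x => f (y x) / f x with ht₁def
  set t₂ : ℝ → ℝ := fun x => f (y x) / f (w x) with ht₂def
  have ht₁O : t₁ =O[F] (fun x => w x - α) := by
    have h1 := hfyO.mul hfxinv
    have h2 : (fun x => E x * (w x - α) * (x - α)⁻¹) =ᶠ[F] (fun x => w x - α) := by
      filter_upwards [hxα] with x hx
      have hne : x - α ≠ 0 := sub_ne_zero.2 hx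
      simp only [hEdef]
      field_simp
    exact (h1.trans_eventuallyEq h2).congr'
      (Eventually.of_forall fun x => (div_eq_mul_inv (f (y x)) (f x)).symm) EventuallyEq.rfl
  have ht₁E : t₁ =O[F] E := ht₁O.trans hwO
  have ht₂E : t₂ =O[F] E := by
    have h1 := hfyO.mul hfwinv
    have h2 : (fun x => E x * (w x - α) * (w x - α)⁻¹) =ᶠ[F] E := by
      filter_upwards [hwα] with x hx
      have hne : w x - α ≠ 0 := sub_ne_zero.2 hx
      field_simp
    exact (h1.trans_eventuallyEq h2).congr'
      (Eventually.of_forall fun x => (div_eq_mul_inv (f (y x)) (f (w x))).symm) EventuallyEq.rfl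
  have ht₁0 : Tendsto t₁ F (𝓝 0) := ht₁E.trans_tendsto hE0
  have ht₂0 : Tendsto t₂ F (𝓝 0) := ht₂E.trans_tendsto hE0
  -- G terms
  have hG₀O : (fun x => G₀ (t₁ x) - 1) =O[F] E := by
    have h1 := ((hG₀.differentiable (by simp)).differentiableAt (x := (0:ℝ))).isBigO_sub.comp_tendsto ht₁0
    simp only [Function.comp_def, hG₀0, sub_zero] at h1
    exact h1.trans ht₁E
  have hG₀b : (fun x => G₀ (t₁ x)) =O[F] (fun _ => (1:ℝ)) := by
    have h : Tendsto (fun x => G₀ (t₁ x)) F (𝓝 (G₀ 0)) :=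
      ((hG₀.continuous.tendsto 0).comp ht₁0)
    exact h.isBigO_one (F := ℝ)
  have hG₁O : (fun x => G₁ (t₂ x) - 1) =O[F] E := by
    have h1 := ((hG₁.differentiable (by simp)).differentiableAt (x := (0:ℝ))).isBigO_sub.comp_tendsto ht₂0
    simp only [Function.comp_def, hG₁0, sub_zero] at h1
    exact h1.trans ht₂E
  have hG₁b : (fun x => G₁ (t₂ x)) =O[F] (fun _ => (1:ℝ)) := by
    have h : Tendsto (fun x => G₁ (t₂ x)) F (𝓝 (G₁ 0)) :=
      ((hG₁.continuous.tendsto 0).comp ht₂0)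
    exact h.isBigO_one (F := ℝ)
  have hpt : Tendsto (fun x => ((t₁ x, t₂ x) : ℝ × ℝ)) F (𝓝 (0, 0)) :=
    ht₁0.prodMk_nhds ht₂0
  have hG₂O : (fun x => G₂ (t₁ x) (t₂ x) - 1) =O[F] E := by
    have h1 := ((hG₂.differentiable (by simp)).differentiableAt
      (x := ((0:ℝ), (0:ℝ)))).isBigO_sub.comp_tendsto hpt
    simp only [Function.comp_def, hG₂0, sub_zero] at h1
    have hpair : (fun x => ((t₁ x, t₂ x) : ℝ × ℝ)) =O[F] E := ht₁E.prod_left ht₂E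
    have h2 : (fun x => ((t₁ x, t₂ x) : ℝ × ℝ) - (0, 0)) =ᶠ[F] (fun x => ((t₁ x, t₂ x) : ℝ × ℝ)) :=
      Eventually.of_forall fun x => by simp
    exact (h1.trans_eventuallyEq h2).trans hpair
  have hG₂b : (fun x => G₂ (t₁ x) (t₂ x)) =O[F] (fun _ => (1:ℝ)) := by
    have h : Tendsto (fun x => G₂ (t₁ x) (t₂ x)) F (𝓝 (G₂ 0 0)) := by
      have := (hG₂.continuous.tendsto ((0:ℝ), (0:ℝ))).comp hpt
      simpa [Function.comp_def] using this
    exact h.isBigO_one (F := ℝ)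
  -- remaining denominators
  have hD₀O : (fun x => dd f (y x) (w x) - c₁) =O[F] E :=
    ddO y w hys hws (by filter_upwards [hmemS] with x hx; exact hx.2.2.2.1) hyOE hwO
  obtain ⟨hD₀inv1, hD₀inv2⟩ := invO (fun x => dd f (y x) (w x)) hD₀O
    (by filter_upwards [hmemS] with x hx; exact hx.2.2.2.2.2.2.1)
  have hD₁O : (fun x => dd f (y x) x - c₁) =O[F] E :=
    ddO y (fun x => x) hys hxs (by filter_upwards [hmemS] with x hx; exact hx.2.2.2.2.1)
      hyOE (isBigO_refl E F)
  obtain ⟨hD₁inv1, hD₁inv2⟩ := invO (fun x => dd f (y x) x) hD₁O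
    (by filter_upwards [hmemS] with x hx; exact hx.2.2.2.2.2.2.2)
  -- the secant slope q along y
  set q : ℝ → ℝ := fun x => if y x = α then c₁ else dd f (y x) α with hqdef
  have hqeq : ∀ x, f (y x) = (y x - α) * q x := by
    intro x
    by_cases h : y x = α
    · simp [hqdef, h, hroot]
    · have hne : y x - α ≠ 0 := sub_ne_zero.2 h
      simp only [hqdef, if_neg h, dd, hroot, sub_zero]
      field_simp
  have hqO : (fun x => q x - c₁) =O[F] E := by
    refine (abs_le_isBigO ?_).trans ((hyOE.norm_left).const_mul_left L)
    filter_upwards [hys] with x hx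
    by_cases h : y x = α
    · simp only [hqdef, if_pos h, sub_self, abs_zero]
      exact mul_nonneg hLnn (abs_nonneg _)
    · have := dd_sub_deriv f hsconv hds hders hLnn hLip hx hαs hαs h
      simp only [sub_self, abs_zero, add_zero] at this
      simpa [hqdef, if_neg h] using this
  have hq1 : (fun x => q x) =O[F] (fun _ => (1:ℝ)) := by
    have htq : Tendsto q F (𝓝 c₁) := by
      have h1 := (hqO.trans_tendsto hE0).add_const c₁
      simpa using h1
    exact htq.isBigO_one (F := ℝ)
  -- the bracket B
  set B : ℝ → ℝ := fun x => g₀ * G₀ (t₁ x) * (dd f (y x) (w x))⁻¹ +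
      g₁ * G₁ (t₂ x) * (dd f (y x) x)⁻¹ + g₂ * G₂ (t₁ x) (t₂ x) * (dd f x (w x))⁻¹ with hBdef
  have hBO : (fun x => B x - c₁⁻¹) =O[F] E := by
    have h₀ : (fun x => (G₀ (t₁ x) - 1) * (dd f (y x) (w x))⁻¹ +
        ((dd f (y x) (w x))⁻¹ - c₁⁻¹)) =O[F] E :=
      ((hG₀O.mul hD₀inv1).trans_eventuallyEq
        (Eventually.of_forall fun x => mul_one _)).add hD₀inv2
    have h₁ : (fun x => (G₁ (t₂ x) - 1) * (dd f (y x) x)⁻¹ +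
        ((dd f (y x) x)⁻¹ - c₁⁻¹)) =O[F] E :=
      ((hG₁O.mul hD₁inv1).trans_eventuallyEq
        (Eventually.of_forall fun x => mul_one _)).add hD₁inv2
    have h₂ : (fun x => (G₂ (t₁ x) (t₂ x) - 1) * (dd f x (w x))⁻¹ +
        ((dd f x (w x))⁻¹ - c₁⁻¹)) =O[F] E :=
      ((hG₂O.mul hD₂inv1).trans_eventuallyEq
        (Eventually.of_forall fun x => mul_one _)).add hD₂inv2
    have hsum3 := ((h₀.const_mul_left g₀).add (h₁.const_mul_left g₁)).add (h₂.const_mul_left g₂)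
    refine hsum3.congr' (Eventually.of_forall fun x => ?_) EventuallyEq.rfl
    show g₀ * _ + g₁ * _ + g₂ * _ = B x - c₁⁻¹
    simp only [hBdef]
    linear_combination (-(c₁⁻¹)) * hsum
  have h1BQ : (fun x => 1 - B x * q x) =O[F] E := by
    have hcc : c₁⁻¹ * c₁ = 1 := inv_mul_cancel₀ hc₁
    have hid : ∀ x, -((B x - c₁⁻¹) * q x) + -(c₁⁻¹ * (q x - c₁)) = 1 - B x * q x := by
      intro x
      linear_combination hcc
    have hl := (((hBO.mul hq1).trans_eventuallyEq
      (Eventually.of_forall fun x => mul_one _)).neg_left).add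
      ((hqO.const_mul_left c₁⁻¹).neg_left)
    exact hl.congr' (Eventually.of_forall hid) EventuallyEq.rfl
  -- final assembly
  have hΦid : (fun x => Φ x - α) =ᶠ[F] (fun x => (y x - α) * (1 - B x * q x)) := by
    apply Eventually.of_forall
    intro x
    show Φ x - α = (y x - α) * (1 - B x * q x)
    rw [hΦ x]
    have e1 : f (y x) / f x = t₁ x := rfl
    have e2 : f (y x) / f (w x) = t₂ x := rfl
    rw [e1, e2, hqeq x]
    simp only [hBdef, div_eq_mul_inv]
    ring
  have hfin := hyO2.mul h1BQ
  exact hfin.congr' hΦid.symm (Eventually.of_forall fun x => by simp only [hEdef]; ring)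
end
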